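/- arXiv:2207.00463 — 11 statements merged into one kernel-verified Lean document; each statement's English description precedes it below -/
import Mathlib

section
/- For every v ∈ Ni ∩ Nk, A(V, Nk, v) = { S₁ ∪ S₂ : S₁ ∈ A(Ri, Ni, v), and S₂ belongs to the union of the following pairwise disjoint collections: A(Rj, Nj, u) for u ∈ Nj with u < v; B(Rj, Nj, u) for u ∈ Nj ∩ Nk; and C(Rj, Nj) }. (Lemma 2, the recurrence for A at an internal node.) -/
variable {V : Type*}

/-- `u` is dominated by the set `S`: some `s ∈ S` equals `u` or is adjacent to `u`. -/
def DomBy (G : SimpleGraph V) (S : Finset V) (u : V) : Prop :=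
  ∃ s ∈ S, s = u ∨ G.Adj s u

/-- `S` dominates `U`. -/
def Dominates (G : SimpleGraph V) (S U : Finset V) : Prop :=
  ∀ u ∈ U, DomBy G S u

variable [LinearOrder V]

/-- `𝒮(R,N)`: subsets of the region `R` dominating `R \ N`. -/
def Scol (G : SimpleGraph V) (R N : Finset V) : Set (Finset V) :=
  {S | S ⊆ R ∧ Dominates G S (R \ N)}

/-- `A(R,N,v)`: members of `𝒮(R,N)` whose intersection with `N` is nonempty with maximum `v`. -/
def setA (G : SimpleGraph V) (R N : Finset V) (v : V) : Set (Finset V) :=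
  {S | S ∈ Scol G R N ∧ v ∈ S ∩ N ∧ ∀ u ∈ S ∩ N, u ≤ v}

/-- `B(R,N,v)`: members of `𝒮(R,N)` disjoint from `N`, with `v` the minimum vertex of `N`
not dominated. -/
def setB (G : SimpleGraph V) (R N : Finset V) (v : V) : Set (Finset V) :=
  {S | S ∈ Scol G R N ∧ S ∩ N = ∅ ∧ v ∈ N ∧ ¬ DomBy G S v ∧ ∀ u ∈ N, ¬ DomBy G S u → v ≤ u}

/-- `C(R,N)`: members of `𝒮(R,N)` disjoint from `N` that dominate all of `N`. -/
def setC (G : SimpleGraph V) (R N : Finset V) : Set (Finset V) :=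
  {S | S ∈ Scol G R N ∧ S ∩ N = ∅ ∧ Dominates G S N}

/-- Lemma 2: the recurrence for `A` at an internal node. -/
theorem recurrence_A [Fintype V] (G : SimpleGraph V) (Ri Rj Ni Nj Nk : Finset V)
    (hdisj : Disjoint Ri Rj) (huniv : Ri ∪ Rj = Finset.univ)
    (hNiRi : Ni ⊆ Ri) (hNjRj : Nj ⊆ Rj) (hNk : Nk ⊆ Ni ∪ Nj)
    (hNi : G.IsClique (Ni : Set V)) (hNj : G.IsClique (Nj : Set V))
    (hNkc : G.IsClique (Nk : Set V))
    (hcross : ∀ a ∈ Ri, ∀ b ∈ Rj, G.Adj a b → a ∈ Nk ∧ b ∈ Nk)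
    (horder : ∀ u ∈ (Ni ∪ Nj) \ Nk, ∀ w ∈ Nk, u < w) :
    ∀ v ∈ Ni ∩ Nk,
      setA G Finset.univ Nk v =
        Set.image2 (· ∪ ·) (setA G Ri Ni v)
          ((⋃ u ∈ Nj.filter (fun u => u < v), setA G Rj Nj u) ∪
           (⋃ u ∈ Nj ∩ Nk, setB G Rj Nj u) ∪
           setC G Rj Nj) := by
  classical
  intro v hv
  rw [Finset.mem_inter] at hv
  obtain ⟨hvNi, hvNk⟩ := hv
  have hvRi : v ∈ Ri := hNiRi hvNi
  have hside : ∀ x : V, x ∈ Ri ∨ x ∈ Rj := fun x =>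
    Finset.mem_union.mp (huniv ▸ Finset.mem_univ x)
  have hdj : ∀ x : V, x ∈ Ri → x ∈ Rj → False :=
    fun x hx hy => Finset.disjoint_left.mp hdisj hx hy
  have hmono : ∀ (S T : Finset V) (u : V), S ⊆ T → DomBy G S u → DomBy G T u := by
    rintro S T u hST ⟨s, hs, h⟩; exact ⟨s, hST hs, h⟩
  ext S
  simp only [Set.mem_image2]
  constructor
  · rintro ⟨⟨-, hdom⟩, hvS, hmax⟩
    rw [Finset.mem_inter] at hvS
    have keyI : ∀ u ∈ Ri, u ∉ Nk → DomBy G S u → DomBy G (S ∩ Ri) u := by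
      rintro u hu hnk ⟨s, hs, h⟩
      rcases hside s with hsR | hsR
      · exact ⟨s, Finset.mem_inter.mpr ⟨hs, hsR⟩, h⟩
      · rcases h with rfl | hadj
        · exact absurd hsR (fun hh => hdj s hu hh)
        · exact absurd (hcross u hu s hsR hadj.symm).1 hnk
    have keyJ : ∀ u ∈ Rj, u ∉ Nk → DomBy G S u → DomBy G (S ∩ Rj) u := by
      rintro u hu hnk ⟨s, hs, h⟩
      rcases hside s with hsR | hsR
      · rcases h with rfl | hadj
        · exact absurd hsR (fun hh => hdj s hh hu)
        · exact absurd (hcross s hsR u hu hadj).2 hnk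
      · exact ⟨s, Finset.mem_inter.mpr ⟨hs, hsR⟩, h⟩
    have hS2col : S ∩ Rj ∈ Scol G Rj Nj := by
      refine ⟨Finset.inter_subset_right, ?_⟩
      intro u hu
      rw [Finset.mem_sdiff] at hu
      obtain ⟨huRj, huNj⟩ := hu
      have hnk : u ∉ Nk := fun h =>
        (Finset.mem_union.mp (hNk h)).elim (fun h2 => hdj u (hNiRi h2) huRj) huNj
      exact keyJ u huRj hnk
        (hdom u (Finset.mem_sdiff.mpr ⟨Finset.mem_univ u, hnk⟩))
    refine ⟨S ∩ Ri, ?_, S ∩ Rj, ?_, ?_⟩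
    · refine ⟨⟨Finset.inter_subset_right, ?_⟩, ?_, ?_⟩
      · intro u hu
        rw [Finset.mem_sdiff] at hu
        obtain ⟨huRi, huNi⟩ := hu
        have hnk : u ∉ Nk := fun h =>
          (Finset.mem_union.mp (hNk h)).elim huNi (fun h2 => hdj u huRi (hNjRj h2))
        exact keyI u huRi hnk
          (hdom u (Finset.mem_sdiff.mpr ⟨Finset.mem_univ u, hnk⟩))
      · exact Finset.mem_inter.mpr ⟨Finset.mem_inter.mpr ⟨hvS.1, hvRi⟩, hvNi⟩
      · intro w hw
        rw [Finset.mem_inter, Finset.mem_inter] at hw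
        obtain ⟨⟨hwS, hwRi⟩, hwNi⟩ := hw
        by_cases hwk : w ∈ Nk
        · exact hmax w (Finset.mem_inter.mpr ⟨hwS, hwk⟩)
        · exact le_of_lt
            (horder w (Finset.mem_sdiff.mpr ⟨Finset.mem_union_left _ hwNi, hwk⟩) v hvNk)
    · by_cases hne : ((S ∩ Rj) ∩ Nj).Nonempty
      · -- A-case for S ∩ Rj
        set u' := ((S ∩ Rj) ∩ Nj).max' hne with hu'def
        have hu'mem : u' ∈ (S ∩ Rj) ∩ Nj := Finset.max'_mem _ hne
        rw [Finset.mem_inter, Finset.mem_inter] at hu'mem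
        obtain ⟨⟨hu'S, hu'Rj⟩, hu'Nj⟩ := hu'mem
        have hu'v : u' < v := by
          by_cases hk : u' ∈ Nk
          · exact lt_of_le_of_ne (hmax u' (Finset.mem_inter.mpr ⟨hu'S, hk⟩))
              (fun h => hdj v hvRi (h ▸ hu'Rj))
          · exact horder u'
              (Finset.mem_sdiff.mpr ⟨Finset.mem_union_right _ hu'Nj, hk⟩) v hvNk
        refine Set.mem_union_left _ (Set.mem_union_left _ ?_)
        simp only [Set.mem_iUnion]
        refine ⟨u', Finset.mem_filter.mpr ⟨hu'Nj, hu'v⟩, hS2col, ?_, ?_⟩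
        · exact Finset.mem_inter.mpr ⟨Finset.mem_inter.mpr ⟨hu'S, hu'Rj⟩, hu'Nj⟩
        · intro w hw
          exact Finset.le_max' _ w hw
      · have hempty : (S ∩ Rj) ∩ Nj = ∅ := Finset.not_nonempty_iff_eq_empty.mp hne
        by_cases hdomN : Dominates G (S ∩ Rj) Nj
        · exact Set.mem_union_right _ ⟨hS2col, hempty, hdomN⟩
        · -- B-case
          have hex : ∃ u ∈ Nj, ¬ DomBy G (S ∩ Rj) u := by
            by_contra h
            push_neg at h
            exact hdomN h
          obtain ⟨u0, hu0, hnd0⟩ := hex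
          set T := Nj.filter (fun u => ¬ DomBy G (S ∩ Rj) u) with hTdef
          have hT : T.Nonempty := ⟨u0, Finset.mem_filter.mpr ⟨hu0, hnd0⟩⟩
          set u' := T.min' hT with hu'def
          have hu'mem : u' ∈ T := Finset.min'_mem _ hT
          rw [hTdef, Finset.mem_filter] at hu'mem
          obtain ⟨hu'Nj, hu'nd⟩ := hu'mem
          have hu'Nk : u' ∈ Nk := by
            by_contra hk
            exact hu'nd (keyJ u' (hNjRj hu'Nj) hk
              (hdom u' (Finset.mem_sdiff.mpr ⟨Finset.mem_univ u', hk⟩)))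
          refine Set.mem_union_left _ (Set.mem_union_right _ ?_)
          simp only [Set.mem_iUnion]
          refine ⟨u', Finset.mem_inter.mpr ⟨hu'Nj, hu'Nk⟩,
            hS2col, hempty, hu'Nj, hu'nd, ?_⟩
          intro w hw hnd
          exact Finset.min'_le T w (Finset.mem_filter.mpr ⟨hw, hnd⟩)
    · rw [← Finset.inter_union_distrib_left, huniv, Finset.inter_univ]
  · rintro ⟨S1, hS1, S2, hS2, rfl⟩
    obtain ⟨⟨hS1R, hS1dom⟩, hvS1, hS1max⟩ := hS1
    rw [Finset.mem_inter] at hvS1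
    obtain ⟨⟨hS2R, hS2dom⟩, hP1, hP2⟩ :
        (S2 ⊆ Rj ∧ Dominates G S2 (Rj \ Nj)) ∧ Dominates G S2 (Nj \ Nk) ∧
          ∀ w ∈ S2 ∩ Nj, w < v := by
      rcases hS2 with (h | h) | h
      · simp only [Set.mem_iUnion] at h
        obtain ⟨u, hu, hScol, humem, humax⟩ := h
        rw [Finset.mem_filter] at hu
        rw [Finset.mem_inter] at humem
        refine ⟨hScol, ?_, fun w hw => lt_of_le_of_lt (humax w hw) hu.2⟩
        intro w hw
        rw [Finset.mem_sdiff] at hw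
        by_cases he : u = w
        · exact ⟨u, humem.1, Or.inl he⟩
        · exact ⟨u, humem.1, Or.inr (hNj (Finset.mem_coe.mpr humem.2)
            (Finset.mem_coe.mpr hw.1) he)⟩
      · simp only [Set.mem_iUnion] at h
        obtain ⟨u, hu, hScol, hemp, huN, hund, humin⟩ := h
        rw [Finset.mem_inter] at hu
        refine ⟨hScol, ?_, fun w hw => absurd (hemp ▸ hw) (Finset.notMem_empty w)⟩
        intro w hw
        rw [Finset.mem_sdiff] at hw
        by_contra hnd
        exact absurd (humin w hw.1 hnd) (not_le.mpr (horder w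
          (Finset.mem_sdiff.mpr ⟨Finset.mem_union_right _ hw.1, hw.2⟩) u hu.2))
      · obtain ⟨hScol, hemp, hdomN⟩ := h
        exact ⟨hScol, fun w hw => hdomN w (Finset.mem_sdiff.mp hw).1,
          fun w hw => absurd (hemp ▸ hw) (Finset.notMem_empty w)⟩
    refine ⟨⟨Finset.subset_univ _, ?_⟩,
      Finset.mem_inter.mpr ⟨Finset.mem_union_left _ hvS1.1, hvNk⟩, ?_⟩
    · intro u hu
      rw [Finset.mem_sdiff] at hu
      have hnk := hu.2
      rcases hside u with huR | huR
      · by_cases hni : u ∈ Ni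
        · refine ⟨v, Finset.mem_union_left _ hvS1.1, ?_⟩
          by_cases he : v = u
          · exact Or.inl he
          · exact Or.inr (hNi (Finset.mem_coe.mpr hvNi) (Finset.mem_coe.mpr hni) he)
        · exact hmono S1 _ u Finset.subset_union_left
            (hS1dom u (Finset.mem_sdiff.mpr ⟨huR, hni⟩))
      · by_cases hnj : u ∈ Nj
        · exact hmono S2 _ u Finset.subset_union_right
            (hP1 u (Finset.mem_sdiff.mpr ⟨hnj, hnk⟩))
        · exact hmono S2 _ u Finset.subset_union_right
            (hS2dom u (Finset.mem_sdiff.mpr ⟨huR, hnj⟩))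
    · intro w hw
      rw [Finset.mem_inter, Finset.mem_union] at hw
      obtain ⟨hwS, hwk⟩ := hw
      rcases hwS with h1 | h2
      · have hwNi : w ∈ Ni := (Finset.mem_union.mp (hNk hwk)).resolve_right
          (fun h => hdj w (hS1R h1) (hNjRj h))
        exact hS1max w (Finset.mem_inter.mpr ⟨h1, hwNi⟩)
      · have hwNj : w ∈ Nj := (Finset.mem_union.mp (hNk hwk)).resolve_left
          (fun h => hdj w (hNiRi h) (hS2R h2))
        exact le_of_lt (hP2 w (Finset.mem_inter.mpr ⟨h2, hwNj⟩))
end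

section
/- For every v ∈ Ni ∩ Nk, B(V, Nk, v) = { S₁ ∪ S₂ : S₁ ∈ B(Ri, Ni, v), and S₂ belongs to the union of the following pairwise disjoint collections: A(Rj, Nj, u) for u ∈ Nj \ Nk; B(Rj, Nj, u) for u ∈ Nj ∩ Nk with u > v; and C(Rj, Nj) }. (Lemma 3, the recurrence for B at an internal node.) -/
variable {V : Type*}

variable [LinearOrder V]

/-- Lemma 3: the recurrence for `B` at an internal node. -/
theorem recurrence_B [Fintype V] (G : SimpleGraph V) (Ri Rj Ni Nj Nk : Finset V)
    (hdisj : Disjoint Ri Rj) (huniv : Ri ∪ Rj = Finset.univ)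
    (hNiRi : Ni ⊆ Ri) (hNjRj : Nj ⊆ Rj) (hNk : Nk ⊆ Ni ∪ Nj)
    (hNi : G.IsClique (Ni : Set V)) (hNj : G.IsClique (Nj : Set V))
    (hNkc : G.IsClique (Nk : Set V))
    (hcross : ∀ a ∈ Ri, ∀ b ∈ Rj, G.Adj a b → a ∈ Nk ∧ b ∈ Nk)
    (horder : ∀ u ∈ (Ni ∪ Nj) \ Nk, ∀ w ∈ Nk, u < w) :
    ∀ v ∈ Ni ∩ Nk,
      setB G Finset.univ Nk v =
        Set.image2 (· ∪ ·) (setB G Ri Ni v)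
          ((⋃ u ∈ Nj \ Nk, setA G Rj Nj u) ∪
           (⋃ u ∈ (Nj ∩ Nk).filter (fun u => v < u), setB G Rj Nj u) ∪
           setC G Rj Nj) := by
  classical
  intro v hv
  obtain ⟨hvNi, hvNk⟩ := Finset.mem_inter.mp hv
  have hvRi : v ∈ Ri := hNiRi hvNi
  have hRiRj : ∀ x, x ∈ Ri → x ∈ Rj → False := fun x hx hy =>
    Finset.disjoint_left.mp hdisj hx hy
  have hNkRi : ∀ x, x ∈ Nk → x ∈ Ri → x ∈ Ni := by
    intro x hx hxr
    rcases Finset.mem_union.mp (hNk hx) with h | h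
    · exact h
    · exact absurd (hNjRj h) (fun hy => hRiRj x hxr hy)
  have hNkRj : ∀ x, x ∈ Nk → x ∈ Rj → x ∈ Nj := by
    intro x hx hxr
    rcases Finset.mem_union.mp (hNk hx) with h | h
    · exact absurd (hNiRi h) (fun hy => hRiRj x hy hxr)
    · exact h
  have hRiorRj : ∀ x : V, x ∈ Ri ∨ x ∈ Rj := by
    intro x
    have : x ∈ Ri ∪ Rj := by rw [huniv]; exact Finset.mem_univ x
    exact Finset.mem_union.mp this
  have domBy_union : ∀ (S T : Finset V) (u : V),
      DomBy G (S ∪ T) u ↔ DomBy G S u ∨ DomBy G T u := by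
    intro S T u
    constructor
    · rintro ⟨s, hs, h⟩
      rcases Finset.mem_union.mp hs with hs | hs
      · exact Or.inl ⟨s, hs, h⟩
      · exact Or.inr ⟨s, hs, h⟩
    · rintro (⟨s, hs, h⟩ | ⟨s, hs, h⟩)
      · exact ⟨s, Finset.mem_union_left _ hs, h⟩
      · exact ⟨s, Finset.mem_union_right _ hs, h⟩
  -- a vertex in Rj cannot dominate a vertex in Ri unless it is in Nk, etc.
  have crossNk : ∀ {s u : V}, s ∈ Rj → u ∈ Ri → (s = u ∨ G.Adj s u) → s ∈ Nk := by
    rintro s u hs hu (rfl | hadj)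
    · exact absurd hs (fun h => hRiRj s hu h)
    · exact (hcross u hu s hs hadj.symm).2
  have crossNk' : ∀ {s u : V}, s ∈ Ri → u ∈ Rj → (s = u ∨ G.Adj s u) → s ∈ Nk := by
    rintro s u hs hu (rfl | hadj)
    · exact absurd hu (fun h => hRiRj s hs h)
    · exact (hcross s hs u hu hadj).1
  ext S
  constructor
  · rintro ⟨⟨-, hdom⟩, hSNk, -, hvnd, hminS⟩
    have hSnk : ∀ s ∈ S, s ∉ Nk := by
      intro s hs hk
      have : s ∈ S ∩ Nk := Finset.mem_inter.mpr ⟨hs, hk⟩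
      rw [hSNk] at this
      exact Finset.notMem_empty s this
    set S₁ := S ∩ Ri with hS₁def
    set S₂ := S ∩ Rj with hS₂def
    have hS₁sub : S₁ ⊆ Ri := Finset.inter_subset_right
    have hS₂sub : S₂ ⊆ Rj := Finset.inter_subset_right
    have hunion : S₁ ∪ S₂ = S := by
      rw [hS₁def, hS₂def, ← Finset.inter_union_distrib_left, huniv, Finset.inter_univ]
    -- localization of domination
    have domloc1 : ∀ u ∈ Ri, DomBy G S u → DomBy G S₁ u := by
      rintro u hu ⟨s, hs, h⟩
      rcases hRiorRj s with hsr | hsr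
      · exact ⟨s, Finset.mem_inter.mpr ⟨hs, hsr⟩, h⟩
      · exact absurd (crossNk hsr hu h) (hSnk s hs)
    have domloc2 : ∀ u ∈ Rj, DomBy G S u → DomBy G S₂ u := by
      rintro u hu ⟨s, hs, h⟩
      rcases hRiorRj s with hsr | hsr
      · exact absurd (crossNk' hsr hu h) (hSnk s hs)
      · exact ⟨s, Finset.mem_inter.mpr ⟨hs, hsr⟩, h⟩
    have hdom' : ∀ u : V, u ∉ Nk → DomBy G S u := by
      intro u hu
      exact hdom u (Finset.mem_sdiff.mpr ⟨Finset.mem_univ u, hu⟩)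
    -- S₁ ∈ setB G Ri Ni v
    have hS₁Ni : S₁ ∩ Ni = ∅ := by
      rw [Finset.eq_empty_iff_forall_notMem]
      intro s hs
      obtain ⟨hs1, hsNi⟩ := Finset.mem_inter.mp hs
      apply hvnd
      refine ⟨s, Finset.mem_inter.mp hs1 |>.1, ?_⟩
      by_cases hsv : s = v
      · exact Or.inl hsv
      · exact Or.inr (hNi (Finset.mem_coe.mpr hsNi) (Finset.mem_coe.mpr hvNi) hsv)
    have hvnd1 : ¬ DomBy G S₁ v := by
      rintro ⟨s, hs, h⟩
      exact hvnd ⟨s, (Finset.mem_inter.mp hs).1, h⟩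
    have hS₁B : S₁ ∈ setB G Ri Ni v := by
      refine ⟨⟨hS₁sub, ?_⟩, hS₁Ni, hvNi, hvnd1, ?_⟩
      · intro u hu
        obtain ⟨huRi, huNi⟩ := Finset.mem_sdiff.mp hu
        have hunk : u ∉ Nk := fun h => huNi (hNkRi u h huRi)
        exact domloc1 u huRi (hdom' u hunk)
      · intro u huNi hund
        by_cases hunk : u ∈ Nk
        · apply hminS u hunk
          rintro ⟨s, hs, h⟩
          rcases hRiorRj s with hsr | hsr
          · exact hund ⟨s, Finset.mem_inter.mpr ⟨hs, hsr⟩, h⟩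
          · exact (hSnk s hs) (crossNk hsr (hNiRi huNi) h)
        · exact absurd (domloc1 u (hNiRi huNi) (hdom' u hunk)) hund
    -- S₂ ∈ Scol G Rj Nj
    have hS₂nk : ∀ s ∈ S₂, s ∉ Nk := fun s hs => hSnk s (Finset.mem_inter.mp hs).1
    have hS₂col : S₂ ∈ Scol G Rj Nj := by
      refine ⟨hS₂sub, ?_⟩
      intro u hu
      obtain ⟨huRj, huNj⟩ := Finset.mem_sdiff.mp hu
      have hunk : u ∉ Nk := fun h => huNj (hNkRj u h huRj)
      exact domloc2 u huRj (hdom' u hunk)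
    refine Set.mem_image2.mpr ⟨S₁, hS₁B, S₂, ?_, hunion⟩
    by_cases hne : (S₂ ∩ Nj).Nonempty
    · -- case A
      left; left
      set u := (S₂ ∩ Nj).max' hne with hu
      have humem : u ∈ S₂ ∩ Nj := Finset.max'_mem _ hne
      obtain ⟨huS₂, huNj⟩ := Finset.mem_inter.mp humem
      have hunk : u ∉ Nk := hS₂nk u huS₂
      refine Set.mem_iUnion₂.mpr ⟨u, Finset.mem_sdiff.mpr ⟨huNj, hunk⟩, ?_⟩
      exact ⟨hS₂col, humem, fun w hw => Finset.le_max' _ w hw⟩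
    · have hS₂Nj : S₂ ∩ Nj = ∅ := Finset.not_nonempty_iff_eq_empty.mp hne
      by_cases hC : Dominates G S₂ Nj
      · -- case C
        right
        exact ⟨hS₂col, hS₂Nj, hC⟩
      · -- case B
        left; right
        have : ∃ u ∈ Nj, ¬ DomBy G S₂ u := by
          by_contra h
          push_neg at h
          exact hC h
        set T := Nj.filter (fun w => ¬ DomBy G S₂ w) with hT
        have hTne : T.Nonempty := by
          obtain ⟨u, hu1, hu2⟩ := this
          exact ⟨u, Finset.mem_filter.mpr ⟨hu1, hu2⟩⟩
        set u := T.min' hTne with hu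
        have humem : u ∈ T := Finset.min'_mem _ hTne
        obtain ⟨huNj, hund⟩ := Finset.mem_filter.mp humem
        have huRj : u ∈ Rj := hNjRj huNj
        have hunk : u ∈ Nk := by
          by_contra hunk
          exact hund (domloc2 u huRj (hdom' u hunk))
        have hundS : ¬ DomBy G S u := by
          rintro ⟨s, hs, h⟩
          rcases hRiorRj s with hsr | hsr
          · exact (hSnk s hs) (crossNk' hsr huRj h)
          · exact hund ⟨s, Finset.mem_inter.mpr ⟨hs, hsr⟩, h⟩
        have hvu : v < u := by
          have hle : v ≤ u := hminS u hunk hundS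
          rcases lt_or_eq_of_le hle with h | h
          · exact h
          · exact absurd (h ▸ huRj) (fun hy => hRiRj v hvRi hy)
        refine Set.mem_iUnion₂.mpr ⟨u, Finset.mem_filter.mpr ⟨Finset.mem_inter.mpr ⟨huNj, hunk⟩, hvu⟩, ?_⟩
        refine ⟨hS₂col, hS₂Nj, huNj, hund, ?_⟩
        intro w hwNj hwnd
        exact Finset.min'_le _ w (Finset.mem_filter.mpr ⟨hwNj, hwnd⟩)
  · rintro ⟨S₁, hS₁, S₂, hS₂, rfl⟩
    obtain ⟨⟨hS₁Ri, hS₁dom⟩, hS₁Ni, -, hvnd1, hmin1⟩ := hS₁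
    have hS₁nk : ∀ s ∈ S₁, s ∉ Nk := by
      intro s hs hk
      have hsRi : s ∈ Ri := hS₁Ri hs
      have : s ∈ S₁ ∩ Ni := Finset.mem_inter.mpr ⟨hs, hNkRi s hk hsRi⟩
      rw [hS₁Ni] at this
      exact Finset.notMem_empty s this
    -- extract common facts from the three cases for S₂
    have key : S₂ ∈ Scol G Rj Nj ∧ (∀ s ∈ S₂, s ∉ Nk) ∧
        (∀ u ∈ Nj, u ∉ Nk → DomBy G S₂ u) ∧
        (∀ u ∈ Nj, ¬ DomBy G S₂ u → v < u) := by
      have nkNj : ∀ (T : Finset V), T ⊆ Rj → ∀ s ∈ T, s ∈ Nk → s ∈ Nj :=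
        fun T hT s hs hk => hNkRj s hk (hT hs)
      rcases hS₂ with (h | h) | h
      · obtain ⟨w, hwmem, hwA⟩ := Set.mem_iUnion₂.mp h
        obtain ⟨hwNj, hwnk⟩ := Finset.mem_sdiff.mp hwmem
        obtain ⟨hcol, hwin, hwmax⟩ := hwA
        obtain ⟨hwS₂, -⟩ := Finset.mem_inter.mp hwin
        have hdomall : ∀ u ∈ Nj, DomBy G S₂ u := by
          intro u huNj
          refine ⟨w, hwS₂, ?_⟩
          by_cases hwu : w = u
          · exact Or.inl hwu
          · exact Or.inr (hNj (Finset.mem_coe.mpr hwNj) (Finset.mem_coe.mpr huNj) hwu)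
        refine ⟨hcol, ?_, fun u hu _ => hdomall u hu, fun u hu hnd => absurd (hdomall u hu) hnd⟩
        intro s hs hk
        have hsNj : s ∈ Nj := nkNj S₂ hcol.1 s hs hk
        have h1 : s ≤ w := hwmax s (Finset.mem_inter.mpr ⟨hs, hsNj⟩)
        have h2 : w < s := horder w (Finset.mem_sdiff.mpr ⟨Finset.mem_union_right _ hwNj, hwnk⟩) s hk
        exact absurd h1 (not_le.mpr h2)
      · obtain ⟨w, hwmem, hwB⟩ := Set.mem_iUnion₂.mp h
        obtain ⟨hwNjNk, hvw⟩ := Finset.mem_filter.mp hwmem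
        obtain ⟨hwNj, hwNk⟩ := Finset.mem_inter.mp hwNjNk
        obtain ⟨hcol, hS₂Nj, -, -, hminw⟩ := hwB
        have hnk : ∀ s ∈ S₂, s ∉ Nk := by
          intro s hs hk
          have : s ∈ S₂ ∩ Nj := Finset.mem_inter.mpr ⟨hs, nkNj S₂ hcol.1 s hs hk⟩
          rw [hS₂Nj] at this
          exact Finset.notMem_empty s this
        refine ⟨hcol, hnk, ?_, ?_⟩
        · intro u huNj hunk
          by_contra hnd
          have h1 : w ≤ u := hminw u huNj hnd
          have h2 : u < w := horder u (Finset.mem_sdiff.mpr ⟨Finset.mem_union_right _ huNj, hunk⟩) w hwNk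
          exact absurd h1 (not_le.mpr h2)
        · intro u huNj hnd
          exact lt_of_lt_of_le hvw (hminw u huNj hnd)
      · obtain ⟨hcol, hS₂Nj, hdomall⟩ := h
        have hnk : ∀ s ∈ S₂, s ∉ Nk := by
          intro s hs hk
          have : s ∈ S₂ ∩ Nj := Finset.mem_inter.mpr ⟨hs, nkNj S₂ hcol.1 s hs hk⟩
          rw [hS₂Nj] at this
          exact Finset.notMem_empty s this
        exact ⟨hcol, hnk, fun u hu _ => hdomall u hu,
          fun u hu hnd => absurd (hdomall u hu) hnd⟩
    obtain ⟨⟨hS₂Rj, hS₂dom⟩, hS₂nk, hdomNjNk, hminNj⟩ := key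
    refine ⟨⟨Finset.subset_univ _, ?_⟩, ?_, hvNk, ?_, ?_⟩
    · -- dominates univ \ Nk
      intro u hu
      have hunk : u ∉ Nk := (Finset.mem_sdiff.mp hu).2
      rcases hRiorRj u with huR | huR
      · rw [domBy_union]
        left
        by_cases huNi : u ∈ Ni
        · by_contra hnd
          have h1 : v ≤ u := hmin1 u huNi hnd
          have h2 : u < v := horder u (Finset.mem_sdiff.mpr ⟨Finset.mem_union_left _ huNi, hunk⟩) v hvNk
          exact absurd h1 (not_le.mpr h2)
        · exact hS₁dom u (Finset.mem_sdiff.mpr ⟨huR, huNi⟩)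
      · rw [domBy_union]
        right
        by_cases huNj : u ∈ Nj
        · exact hdomNjNk u huNj hunk
        · exact hS₂dom u (Finset.mem_sdiff.mpr ⟨huR, huNj⟩)
    · -- (S₁ ∪ S₂) ∩ Nk = ∅
      rw [Finset.eq_empty_iff_forall_notMem]
      intro s hs
      obtain ⟨hs1, hsk⟩ := Finset.mem_inter.mp hs
      rcases Finset.mem_union.mp hs1 with h | h
      · exact hS₁nk s h hsk
      · exact hS₂nk s h hsk
    · -- v not dominated
      rw [domBy_union]
      rintro (h | ⟨s, hs, hh⟩)
      · exact hvnd1 h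
      · exact hS₂nk s hs (crossNk (hS₂Rj hs) hvRi hh)
    · -- minimality
      intro u huNk hund
      rw [domBy_union] at hund
      push_neg at hund
      rcases Finset.mem_union.mp (hNk huNk) with h | h
      · exact hmin1 u h hund.1
      · exact le_of_lt (hminNj u h hund.2)
end

section
/- C(V, Nk) = { S₁ ∪ S₂ : S₁ belongs to the union of the pairwise disjoint collections A(Ri, Ni, u) for u ∈ Ni \ Nk together with C(Ri, Ni), and S₂ belongs to the union of the pairwise disjoint collections A(Rj, Nj, u) for u ∈ Nj \ Nk together with C(Rj, Nj) }. (Lemma 4, the recurrence for C at an internal node.) -/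
variable {V : Type*}

variable [LinearOrder V]

/-- Auxiliary: any member of the union of the `A`-collections (over `N \ Nk`) together with
`C(R,N)` is contained in `R`, avoids `Nk`, and dominates all of `R`. -/
lemma side_mem (G : SimpleGraph V) (R N Nk : Finset V)
    (hNR : N ⊆ R) (hNkR : ∀ w ∈ Nk, w ∈ R → w ∈ N)
    (horder : ∀ u ∈ N, u ∉ Nk → ∀ w ∈ Nk, u < w)
    (hN : G.IsClique (N : Set V)) (S : Finset V)
    (hS : S ∈ (⋃ u ∈ N \ Nk, setA G R N u) ∪ setC G R N) :
    S ⊆ R ∧ S ∩ Nk = ∅ ∧ Dominates G S R := by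
  rcases hS with hS | hS
  · simp only [Set.mem_iUnion] at hS
    obtain ⟨u, hu, ⟨⟨hSR, hdom⟩, huS, hmax⟩⟩ := hS
    rw [Finset.mem_sdiff] at hu
    rw [Finset.mem_inter] at huS
    refine ⟨hSR, ?_, ?_⟩
    · rw [Finset.eq_empty_iff_forall_notMem]
      intro s hs
      rw [Finset.mem_inter] at hs
      have hsN : s ∈ N := hNkR s hs.2 (hSR hs.1)
      have h1 : s ≤ u := hmax s (Finset.mem_inter.mpr ⟨hs.1, hsN⟩)
      exact absurd (horder u hu.1 hu.2 s hs.2) (not_lt.mpr h1)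
    · intro v hv
      by_cases hvN : v ∈ N
      · by_cases huv : u = v
        · exact ⟨u, huS.1, Or.inl huv⟩
        · exact ⟨u, huS.1, Or.inr (hN (by exact_mod_cast huS.2) (by exact_mod_cast hvN) huv)⟩
      · exact hdom v (Finset.mem_sdiff.mpr ⟨hv, hvN⟩)
  · obtain ⟨⟨hSR, hdom⟩, hSN, hdomN⟩ := hS
    refine ⟨hSR, ?_, ?_⟩
    · rw [Finset.eq_empty_iff_forall_notMem]
      intro s hs
      rw [Finset.mem_inter] at hs
      have hsN : s ∈ N := hNkR s hs.2 (hSR hs.1)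
      exact absurd (Finset.mem_inter.mpr ⟨hs.1, hsN⟩) (by simp [hSN])
    · intro v hv
      by_cases hvN : v ∈ N
      · exact hdomN v hvN
      · exact hdom v (Finset.mem_sdiff.mpr ⟨hv, hvN⟩)

/-- Auxiliary: a member of `C(univ, Nk)` intersected with a region `R` (closed under
cross-edges) belongs to the union of the `A`-collections with `C(R,N)`. -/
lemma side_split [Fintype V] (G : SimpleGraph V) (R N Nk S : Finset V)
    (hNR : N ⊆ R)
    (hcross : ∀ a ∈ R, ∀ s, s ∉ R → G.Adj s a → s ∈ Nk ∧ a ∈ Nk)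
    (hdom1 : Dominates G S (Finset.univ \ Nk)) (hdom2 : Dominates G S Nk)
    (hSNk : S ∩ Nk = ∅) :
    S ∩ R ∈ (⋃ u ∈ N \ Nk, setA G R N u) ∪ setC G R N := by
  have hsub : S ∩ R ⊆ R := Finset.inter_subset_right
  have hdomR : Dominates G (S ∩ R) R := by
    intro v hv
    by_cases hvNk : v ∈ Nk
    · obtain ⟨s, hsS, hse⟩ := hdom2 v hvNk
      rcases hse with rfl | hadj
      · exact absurd (Finset.mem_inter.mpr ⟨hsS, hvNk⟩) (by simp [hSNk])
      · by_cases hsR : s ∈ R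
        · exact ⟨s, Finset.mem_inter.mpr ⟨hsS, hsR⟩, Or.inr hadj⟩
        · exact absurd (Finset.mem_inter.mpr ⟨hsS, (hcross v hv s hsR hadj).1⟩)
            (by simp [hSNk])
    · obtain ⟨s, hsS, hse⟩ := hdom1 v (Finset.mem_sdiff.mpr ⟨Finset.mem_univ v, hvNk⟩)
      rcases hse with rfl | hadj
      · exact ⟨s, Finset.mem_inter.mpr ⟨hsS, hv⟩, Or.inl rfl⟩
      · by_cases hsR : s ∈ R
        · exact ⟨s, Finset.mem_inter.mpr ⟨hsS, hsR⟩, Or.inr hadj⟩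
        · exact absurd (hcross v hv s hsR hadj).2 hvNk
  have hdomRN : Dominates G (S ∩ R) (R \ N) := fun v hv =>
    hdomR v (Finset.mem_sdiff.mp hv).1
  by_cases hne : ((S ∩ R) ∩ N).Nonempty
  · left
    simp only [Set.mem_iUnion]
    set u := ((S ∩ R) ∩ N).max' hne with hu
    have humem : u ∈ (S ∩ R) ∩ N := Finset.max'_mem _ hne
    have huN : u ∈ N := (Finset.mem_inter.mp humem).2
    have huNk : u ∉ Nk := by
      intro hc
      have : u ∈ S ∩ Nk :=
        Finset.mem_inter.mpr ⟨(Finset.mem_inter.mp (Finset.mem_inter.mp humem).1).1, hc⟩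
      simp [hSNk] at this
    exact ⟨u, Finset.mem_sdiff.mpr ⟨huN, huNk⟩, ⟨hsub, hdomRN⟩, humem,
      fun w hw => Finset.le_max' _ w hw⟩
  · right
    refine ⟨⟨hsub, hdomRN⟩, Finset.not_nonempty_iff_eq_empty.mp hne, fun v hv => hdomR v (hNR hv)⟩

/-- Lemma 4: the recurrence for `C` at an internal node. -/
theorem recurrence_C [Fintype V] (G : SimpleGraph V) (Ri Rj Ni Nj Nk : Finset V)
    (hdisj : Disjoint Ri Rj) (huniv : Ri ∪ Rj = Finset.univ)
    (hNiRi : Ni ⊆ Ri) (hNjRj : Nj ⊆ Rj) (hNk : Nk ⊆ Ni ∪ Nj)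
    (hNi : G.IsClique (Ni : Set V)) (hNj : G.IsClique (Nj : Set V))
    (hNkc : G.IsClique (Nk : Set V))
    (hcross : ∀ a ∈ Ri, ∀ b ∈ Rj, G.Adj a b → a ∈ Nk ∧ b ∈ Nk)
    (horder : ∀ u ∈ (Ni ∪ Nj) \ Nk, ∀ w ∈ Nk, u < w) :
    setC G Finset.univ Nk =
      Set.image2 (· ∪ ·)
        ((⋃ u ∈ Ni \ Nk, setA G Ri Ni u) ∪ setC G Ri Ni)
        ((⋃ u ∈ Nj \ Nk, setA G Rj Nj u) ∪ setC G Rj Nj) := by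
  have hRiNk : ∀ w ∈ Nk, w ∈ Ri → w ∈ Ni := by
    intro w hw hwRi
    rcases Finset.mem_union.mp (hNk hw) with h | h
    · exact h
    · exact absurd hwRi (Finset.disjoint_right.mp hdisj (hNjRj h))
  have hRjNk : ∀ w ∈ Nk, w ∈ Rj → w ∈ Nj := by
    intro w hw hwRj
    rcases Finset.mem_union.mp (hNk hw) with h | h
    · exact absurd (hNiRi h) (Finset.disjoint_right.mp hdisj hwRj)
    · exact h
  have hordi : ∀ u ∈ Ni, u ∉ Nk → ∀ w ∈ Nk, u < w := fun u hu hunk w hw =>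
    horder u (Finset.mem_sdiff.mpr ⟨Finset.mem_union_left _ hu, hunk⟩) w hw
  have hordj : ∀ u ∈ Nj, u ∉ Nk → ∀ w ∈ Nk, u < w := fun u hu hunk w hw =>
    horder u (Finset.mem_sdiff.mpr ⟨Finset.mem_union_right _ hu, hunk⟩) w hw
  have hcrossi : ∀ a ∈ Ri, ∀ s, s ∉ Ri → G.Adj s a → s ∈ Nk ∧ a ∈ Nk := by
    intro a ha s hs hadj
    have hsRj : s ∈ Rj := by
      have : s ∈ Ri ∪ Rj := huniv ▸ Finset.mem_univ s
      rcases Finset.mem_union.mp this with h | h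
      · exact absurd h hs
      · exact h
    have := hcross a ha s hsRj hadj.symm
    exact ⟨this.2, this.1⟩
  have hcrossj : ∀ a ∈ Rj, ∀ s, s ∉ Rj → G.Adj s a → s ∈ Nk ∧ a ∈ Nk := by
    intro a ha s hs hadj
    have hsRi : s ∈ Ri := by
      have : s ∈ Ri ∪ Rj := huniv ▸ Finset.mem_univ s
      rcases Finset.mem_union.mp this with h | h
      · exact h
      · exact absurd h hs
    exact hcross s hsRi a ha hadj
  ext S
  constructor
  · rintro ⟨⟨hSub, hdom1⟩, hSNk, hdom2⟩
    refine ⟨S ∩ Ri, ?_, S ∩ Rj, ?_, ?_⟩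
    · exact side_split G Ri Ni Nk S hNiRi hcrossi hdom1 hdom2 hSNk
    · exact side_split G Rj Nj Nk S hNjRj hcrossj hdom1 hdom2 hSNk
    · show S ∩ Ri ∪ S ∩ Rj = S
      rw [← Finset.inter_union_distrib_left, huniv, Finset.inter_univ]
  · rintro ⟨S₁, h₁, S₂, h₂, rfl⟩
    obtain ⟨hS1R, hS1Nk, hS1dom⟩ := side_mem G Ri Ni Nk hNiRi hRiNk hordi hNi S₁ h₁
    obtain ⟨hS2R, hS2Nk, hS2dom⟩ := side_mem G Rj Nj Nk hNjRj hRjNk hordj hNj S₂ h₂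
    have hdomU : Dominates G (S₁ ∪ S₂) Finset.univ := by
      intro v _
      have : v ∈ Ri ∪ Rj := huniv ▸ Finset.mem_univ v
      rcases Finset.mem_union.mp this with h | h
      · obtain ⟨s, hs, he⟩ := hS1dom v h
        exact ⟨s, Finset.mem_union_left _ hs, he⟩
      · obtain ⟨s, hs, he⟩ := hS2dom v h
        exact ⟨s, Finset.mem_union_right _ hs, he⟩
    refine ⟨⟨Finset.subset_univ _, fun v hv => hdomU v (Finset.mem_univ v)⟩, ?_,
      fun v hv => hdomU v (Finset.mem_univ v)⟩
    rw [Finset.union_inter_distrib_right, hS1Nk, hS2Nk, Finset.union_empty]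
end

section
/- Let N ⊆ V be a clique of G. Then the collection of dominating sets of G equals the disjoint union of the collections A(V, N, v) for v ∈ N together with C(V, N); consequently S ⊆ V is a dominating set of G if and only if S ∈ A(V,N,v) for some v ∈ N or S ∈ C(V,N). -/
variable {V : Type*}

variable [LinearOrder V]

/-- If `N` is a clique, the collection of dominating sets of `G` is the disjoint union of the
collections `A(V,N,v)` for `v ∈ N` together with `C(V,N)`; consequently `S` is a dominating set
iff `S ∈ A(V,N,v)` for some `v ∈ N` or `S ∈ C(V,N)`. -/
theorem dominatingSets_eq_A_union_C [Fintype V] (G : SimpleGraph V) (N : Finset V)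
    (hN : G.IsClique (N : Set V)) :
    {S : Finset V | Dominates G S Finset.univ} =
      (⋃ v ∈ N, setA G Finset.univ N v) ∪ setC G Finset.univ N ∧
    (∀ v ∈ N, ∀ w ∈ N, v ≠ w →
      Disjoint (setA G Finset.univ N v) (setA G Finset.univ N w)) ∧
    (∀ v ∈ N, Disjoint (setA G Finset.univ N v) (setC G Finset.univ N)) ∧
    (∀ S : Finset V, Dominates G S Finset.univ ↔
      (∃ v ∈ N, S ∈ setA G Finset.univ N v) ∨ S ∈ setC G Finset.univ N) := by
  have key : ∀ S : Finset V, Dominates G S Finset.univ ↔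
      (∃ v ∈ N, S ∈ setA G Finset.univ N v) ∨ S ∈ setC G Finset.univ N := by
    intro S
    constructor
    · intro hS
      have hScol : S ∈ Scol G Finset.univ N :=
        ⟨Finset.subset_univ S, fun u _ => hS u (Finset.mem_univ u)⟩
      by_cases h : (S ∩ N).Nonempty
      · left
        refine ⟨(S ∩ N).max' h, Finset.mem_of_mem_inter_right ((S ∩ N).max'_mem h),
          Set.mem_setOf_eq ▸ ⟨hScol, (S ∩ N).max'_mem h, fun u hu => (S ∩ N).le_max' u hu⟩⟩
      · right
        exact ⟨hScol, Finset.not_nonempty_iff_eq_empty.mp h,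
          fun u _ => hS u (Finset.mem_univ u)⟩
    · rintro (⟨v, hvN, hScol, hvS, _⟩ | ⟨hScol, hSN, hdom⟩)
      · intro u _
        by_cases hu : u ∈ N
        · rcases eq_or_ne v u with rfl | hne
          · exact ⟨v, Finset.mem_of_mem_inter_left hvS, Or.inl rfl⟩
          · exact ⟨v, Finset.mem_of_mem_inter_left hvS,
              Or.inr (hN (Finset.mem_of_mem_inter_right hvS) hu hne)⟩
        · exact hScol.2 u (Finset.mem_sdiff.mpr ⟨Finset.mem_univ u, hu⟩)
      · intro u _
        by_cases hu : u ∈ N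
        · exact hdom u hu
        · exact hScol.2 u (Finset.mem_sdiff.mpr ⟨Finset.mem_univ u, hu⟩)
  refine ⟨?_, ?_, ?_, key⟩
  · ext S
    simp only [Set.mem_setOf_eq, Set.mem_union, Set.mem_iUnion, exists_prop]
    exact key S
  · intro v hv w hw hvw
    rw [Set.disjoint_left]
    rintro S ⟨_, hvS, hmaxv⟩ ⟨_, hwS, hmaxw⟩
    exact hvw (le_antisymm (hmaxw v hvS) (hmaxv w hwS))
  · intro v hv
    rw [Set.disjoint_left]
    rintro S ⟨_, hvS, _⟩ ⟨_, hSN, _⟩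
    exact absurd (hSN ▸ hvS) (Finset.notMem_empty v)
end

section
/- For every v ∈ Ni ∩ Nk, |A(V, Nk, v)| = |A(Ri, Ni, v)| · ( Σ_{u ∈ Nj, u < v} |A(Rj, Nj, u)| + Σ_{u ∈ Nj ∩ Nk} |B(Rj, Nj, u)| + |C(Rj, Nj)| ). (The cardinality recurrence for A used in the counting algorithm.) -/
variable {V : Type*}

variable [LinearOrder V]

lemma my_ncard_prod {α β : Type*} (s : Set α) (t : Set β) :
    (s ×ˢ t).ncard = s.ncard * t.ncard := by
  rw [← Nat.card_coe_set_eq, ← Nat.card_coe_set_eq, ← Nat.card_coe_set_eq,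
    Nat.card_congr (Equiv.Set.prod s t), Nat.card_prod]

lemma my_ncard_biUnion {ι α : Type*} [Finite α] (s : Finset ι) (f : ι → Set α)
    (hd : (↑s : Set ι).Pairwise (Function.onFun Disjoint f)) :
    (⋃ i ∈ s, f i).ncard = ∑ i ∈ s, (f i).ncard := by
  classical
  induction s using Finset.induction_on with
  | empty => simp
  | @insert a s ha ih =>
      rw [Finset.set_biUnion_insert, Set.ncard_union_eq, Finset.sum_insert ha,
        ih (hd.mono (by intro x hx; simp [Finset.mem_coe.1 hx]))]
      refine Set.disjoint_left.2 fun x hxa hxU => ?_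
      obtain ⟨i, hi, hxi⟩ := Set.mem_iUnion₂.1 hxU
      exact Set.disjoint_left.1
        (hd (by simp) (by simp [hi]) (by rintro rfl; exact ha hi)) hxa hxi

/-- The cardinality recurrence for `A` used in the counting algorithm. -/
theorem card_recurrence_A [Fintype V] (G : SimpleGraph V) (Ri Rj Ni Nj Nk : Finset V)
    (hdisj : Disjoint Ri Rj) (huniv : Ri ∪ Rj = Finset.univ)
    (hNiRi : Ni ⊆ Ri) (hNjRj : Nj ⊆ Rj) (hNk : Nk ⊆ Ni ∪ Nj)
    (hNi : G.IsClique (Ni : Set V)) (hNj : G.IsClique (Nj : Set V))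
    (hNkc : G.IsClique (Nk : Set V))
    (hcross : ∀ a ∈ Ri, ∀ b ∈ Rj, G.Adj a b → a ∈ Nk ∧ b ∈ Nk)
    (horder : ∀ u ∈ (Ni ∪ Nj) \ Nk, ∀ w ∈ Nk, u < w) :
    ∀ v ∈ Ni ∩ Nk,
      (setA G Finset.univ Nk v).ncard =
        (setA G Ri Ni v).ncard *
          ((∑ u ∈ Nj.filter (fun u => u < v), (setA G Rj Nj u).ncard) +
           (∑ u ∈ Nj ∩ Nk, (setB G Rj Nj u).ncard) +
           (setC G Rj Nj).ncard) := by
  classical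
  intro v hv
  obtain ⟨hvNi, hvNk⟩ := Finset.mem_inter.1 hv
  have hvRi : v ∈ Ri := hNiRi hvNi
  have hboth : ∀ x, x ∈ Ri → x ∈ Rj → False := fun x h1 h2 =>
    Finset.disjoint_left.1 hdisj h1 h2
  have hRiRj : ∀ x : V, x ∈ Ri ∨ x ∈ Rj := fun x => by
    have : x ∈ Ri ∪ Rj := by rw [huniv]; exact Finset.mem_univ x
    exact Finset.mem_union.1 this
  have hNkNi : ∀ x, x ∈ Nk → x ∈ Ri → x ∈ Ni := fun x hx hxRi => by
    rcases Finset.mem_union.1 (hNk hx) with h | h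
    · exact h
    · exact absurd (hNjRj h) (fun hh => hboth x hxRi hh)
  have hNkNj : ∀ x, x ∈ Nk → x ∈ Rj → x ∈ Nj := fun x hx hxRj => by
    rcases Finset.mem_union.1 (hNk hx) with h | h
    · exact absurd (hNiRi h) (fun hh => hboth x hh hxRj)
    · exact h
  set U1 : Set (Finset V) := ⋃ u ∈ Nj.filter (fun u => u < v), setA G Rj Nj u with hU1
  set U2 : Set (Finset V) := ⋃ u ∈ Nj ∩ Nk, setB G Rj Nj u with hU2
  set T : Set (Finset V) := (U1 ∪ U2) ∪ setC G Rj Nj with hT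
  have hTscol : ∀ S ∈ T, S ∈ Scol G Rj Nj := by
    intro S hS
    rcases hS with (hS | hS) | hS
    · obtain ⟨u, hu, hSu⟩ := Set.mem_iUnion₂.1 hS; exact hSu.1
    · obtain ⟨u, hu, hSu⟩ := Set.mem_iUnion₂.1 hS; exact hSu.1
    · exact hS.1
  have hTdom : ∀ S ∈ T, ∀ u ∈ Nj, u ∉ Nk → DomBy G S u := by
    intro S hS u huNj huNk
    rcases hS with (hS | hS) | hS
    · obtain ⟨w, hw, hSw⟩ := Set.mem_iUnion₂.1 hS
      obtain ⟨hwS, hwNj⟩ := Finset.mem_inter.1 hSw.2.1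
      by_cases hwe : w = u
      · exact ⟨w, hwS, Or.inl hwe⟩
      · exact ⟨w, hwS, Or.inr (hNj (Finset.mem_coe.2 hwNj) (Finset.mem_coe.2 huNj) hwe)⟩
    · obtain ⟨w, hw, hSw⟩ := Set.mem_iUnion₂.1 hS
      obtain ⟨hwNj, hwNk⟩ := Finset.mem_inter.1 hw
      by_contra hnd
      have h1 := hSw.2.2.2.2 u huNj hnd
      have h2 := horder u (Finset.mem_sdiff.2 ⟨Finset.mem_union_right _ huNj, huNk⟩) w hwNk
      exact absurd h1 (not_le.2 h2)
    · exact hS.2.2 u huNj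
  have hTmax : ∀ S ∈ T, ∀ u ∈ S ∩ Nj, u < v := by
    intro S hS u hu
    rcases hS with (hS | hS) | hS
    · obtain ⟨w, hw, hSw⟩ := Set.mem_iUnion₂.1 hS
      exact lt_of_le_of_lt (hSw.2.2 u hu) (Finset.mem_filter.1 hw).2
    · obtain ⟨w, hw, hSw⟩ := Set.mem_iUnion₂.1 hS
      exact absurd hu (by rw [hSw.2.1]; exact Finset.notMem_empty u)
    · exact absurd hu (by rw [hS.2.1]; exact Finset.notMem_empty u)
  have hsplit : setA G Finset.univ Nk v =
      (fun p : Finset V × Finset V => p.1 ∪ p.2) '' ((setA G Ri Ni v) ×ˢ T) := by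
    ext S
    constructor
    · rintro ⟨⟨hsub, hdom⟩, hvS, hmax⟩
      obtain ⟨hvS', hvNk'⟩ := Finset.mem_inter.1 hvS
      refine ⟨(S ∩ Ri, S ∩ Rj), ⟨?_, ?_⟩, ?_⟩
      · -- S ∩ Ri ∈ setA G Ri Ni v
        refine ⟨⟨Finset.inter_subset_right, ?_⟩, ?_, ?_⟩
        · intro u hu
          obtain ⟨huRi, huNi⟩ := Finset.mem_sdiff.1 hu
          have huNk : u ∉ Nk := fun h => huNi (hNkNi u h huRi)
          obtain ⟨s, hsS, hcase⟩ := hdom u (Finset.mem_sdiff.2 ⟨Finset.mem_univ u, huNk⟩)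
          have hsRi : s ∈ Ri := by
            rcases hRiRj s with h | h
            · exact h
            · exfalso
              rcases hcase with rfl | hadj
              · exact hboth s huRi h
              · exact huNk (hcross u huRi s h hadj.symm).1
          exact ⟨s, Finset.mem_inter.2 ⟨hsS, hsRi⟩, hcase⟩
        · exact Finset.mem_inter.2 ⟨Finset.mem_inter.2 ⟨hvS', hvRi⟩, hvNi⟩
        · intro u hu
          obtain ⟨huSRi, huNi⟩ := Finset.mem_inter.1 hu
          obtain ⟨huS, huRi⟩ := Finset.mem_inter.1 huSRi
          by_cases huNk : u ∈ Nk
          · exact hmax u (Finset.mem_inter.2 ⟨huS, huNk⟩)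
          · exact le_of_lt
              (horder u (Finset.mem_sdiff.2 ⟨Finset.mem_union_left _ huNi, huNk⟩) v hvNk)
      · -- S ∩ Rj ∈ T
        have hscol : S ∩ Rj ∈ Scol G Rj Nj := by
          refine ⟨Finset.inter_subset_right, ?_⟩
          intro u hu
          obtain ⟨huRj, huNj⟩ := Finset.mem_sdiff.1 hu
          have huNk : u ∉ Nk := fun h => huNj (hNkNj u h huRj)
          obtain ⟨s, hsS, hcase⟩ := hdom u (Finset.mem_sdiff.2 ⟨Finset.mem_univ u, huNk⟩)
          have hsRj : s ∈ Rj := by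
            rcases hRiRj s with h | h
            · exfalso
              rcases hcase with rfl | hadj
              · exact hboth s h huRj
              · exact huNk (hcross s h u huRj hadj).2
            · exact h
          exact ⟨s, Finset.mem_inter.2 ⟨hsS, hsRj⟩, hcase⟩
        rcases Finset.eq_empty_or_nonempty ((S ∩ Rj) ∩ Nj) with hemp | hne
        · by_cases hC : Dominates G (S ∩ Rj) Nj
          · exact Or.inr ⟨hscol, hemp, hC⟩
          · simp only [Dominates] at hC
            push_neg at hC
            obtain ⟨u0, hu0Nj, hu0nd⟩ := hC
            set F := Nj.filter (fun u => ¬ DomBy G (S ∩ Rj) u) with hF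
            have hFne : F.Nonempty := ⟨u0, Finset.mem_filter.2 ⟨hu0Nj, hu0nd⟩⟩
            obtain ⟨hwNj, hwnd⟩ := Finset.mem_filter.1 (F.min'_mem hFne)
            have hmin : ∀ u ∈ Nj, ¬ DomBy G (S ∩ Rj) u → F.min' hFne ≤ u := fun u hu hnd =>
              F.min'_le u (Finset.mem_filter.2 ⟨hu, hnd⟩)
            have hwNk : F.min' hFne ∈ Nk := by
              by_contra hwNk
              obtain ⟨s, hsS, hcase⟩ :=
                hdom (F.min' hFne) (Finset.mem_sdiff.2 ⟨Finset.mem_univ _, hwNk⟩)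
              have hsRj : s ∈ Rj := by
                rcases hRiRj s with h | h
                · exfalso
                  rcases hcase with he | hadj
                  · exact hboth s h (by rw [he]; exact hNjRj hwNj)
                  · exact hwNk (hcross s h _ (hNjRj hwNj) hadj).2
                · exact h
              exact hwnd ⟨s, Finset.mem_inter.2 ⟨hsS, hsRj⟩, hcase⟩
            exact Or.inl (Or.inr (Set.mem_iUnion₂.2 ⟨F.min' hFne,
              Finset.mem_inter.2 ⟨hwNj, hwNk⟩, hscol, hemp, hwNj, hwnd, hmin⟩))
        · have hwmem := ((S ∩ Rj) ∩ Nj).max'_mem hne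
          obtain ⟨hwSRj, hwNj⟩ := Finset.mem_inter.1 hwmem
          obtain ⟨hwS, hwRj⟩ := Finset.mem_inter.1 hwSRj
          have hwlt : ((S ∩ Rj) ∩ Nj).max' hne < v := by
            by_cases hwNk : ((S ∩ Rj) ∩ Nj).max' hne ∈ Nk
            · exact lt_of_le_of_ne (hmax _ (Finset.mem_inter.2 ⟨hwS, hwNk⟩))
                (fun h => hboth v hvRi (h ▸ hwRj))
            · exact horder _ (Finset.mem_sdiff.2 ⟨Finset.mem_union_right _ hwNj, hwNk⟩) v hvNk
          exact Or.inl (Or.inl (Set.mem_iUnion₂.2 ⟨((S ∩ Rj) ∩ Nj).max' hne,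
            Finset.mem_filter.2 ⟨hwNj, hwlt⟩,
            hscol, hwmem, fun u hu => Finset.le_max' _ u hu⟩))
      · show (S ∩ Ri) ∪ (S ∩ Rj) = S
        rw [← Finset.inter_union_distrib_left, huniv, Finset.inter_univ]
    · rintro ⟨⟨Si, Sj⟩, ⟨hSi, hSj⟩, rfl⟩
      show Si ∪ Sj ∈ setA G Finset.univ Nk v
      obtain ⟨⟨hSisub, hSidom⟩, hvSi, hSimax⟩ := hSi
      obtain ⟨hvSi', hvNi'⟩ := Finset.mem_inter.1 hvSi
      obtain ⟨hSjsub, hSjdom⟩ := hTscol Sj hSj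
      refine ⟨⟨Finset.subset_univ _, ?_⟩, ?_, ?_⟩
      · intro u hu
        have huNk : u ∉ Nk := (Finset.mem_sdiff.1 hu).2
        rcases hRiRj u with huR | huR
        · by_cases huNi : u ∈ Ni
          · have hne : v ≠ u := fun h => huNk (h ▸ hvNk)
            exact ⟨v, Finset.mem_union_left _ hvSi',
              Or.inr (hNi (Finset.mem_coe.2 hvNi) (Finset.mem_coe.2 huNi) hne)⟩
          · obtain ⟨s, hs, hc⟩ := hSidom u (Finset.mem_sdiff.2 ⟨huR, huNi⟩)
            exact ⟨s, Finset.mem_union_left _ hs, hc⟩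
        · by_cases huNj : u ∈ Nj
          · obtain ⟨s, hs, hc⟩ := hTdom Sj hSj u huNj huNk
            exact ⟨s, Finset.mem_union_right _ hs, hc⟩
          · obtain ⟨s, hs, hc⟩ := hSjdom u (Finset.mem_sdiff.2 ⟨huR, huNj⟩)
            exact ⟨s, Finset.mem_union_right _ hs, hc⟩
      · exact Finset.mem_inter.2 ⟨Finset.mem_union_left _ hvSi', hvNk⟩
      · intro u hu
        obtain ⟨huS, huNk⟩ := Finset.mem_inter.1 hu
        rcases Finset.mem_union.1 huS with h | h
        · exact hSimax u (Finset.mem_inter.2 ⟨h, hNkNi u huNk (hSisub h)⟩)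
        · exact le_of_lt (hTmax Sj hSj u (Finset.mem_inter.2 ⟨h, hNkNj u huNk (hSjsub h)⟩))
  have hinj : Set.InjOn (fun p : Finset V × Finset V => p.1 ∪ p.2)
      ((setA G Ri Ni v) ×ˢ T) := by
    have key : ∀ (A B : Finset V), A ⊆ Ri → B ⊆ Rj → (A ∪ B) ∩ Ri = A := by
      intro A B hA hB
      ext x
      simp only [Finset.mem_inter, Finset.mem_union]
      constructor
      · rintro ⟨h | h, hRi⟩
        · exact h
        · exact absurd (hB h) (fun hh => hboth x hRi hh)
      · intro h; exact ⟨Or.inl h, hA h⟩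
    have key2 : ∀ (A B : Finset V), A ⊆ Ri → B ⊆ Rj → (A ∪ B) ∩ Rj = B := by
      intro A B hA hB
      ext x
      simp only [Finset.mem_inter, Finset.mem_union]
      constructor
      · rintro ⟨h | h, hRj⟩
        · exact absurd (hA h) (fun hh => hboth x hh hRj)
        · exact h
      · intro h; exact ⟨Or.inr h, hB h⟩
    rintro ⟨S1, S2⟩ ⟨h1, h2⟩ ⟨S1', S2'⟩ ⟨h1', h2'⟩ heq
    simp only at heq
    have hs1 : S1 ⊆ Ri := h1.1.1
    have hs1' : S1' ⊆ Ri := h1'.1.1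
    have hs2 : S2 ⊆ Rj := (hTscol _ h2).1
    have hs2' : S2' ⊆ Rj := (hTscol _ h2').1
    have e1 : S1 = S1' := by
      rw [← key S1 S2 hs1 hs2, ← key S1' S2' hs1' hs2', heq]
    have e2 : S2 = S2' := by
      rw [← key2 S1 S2 hs1 hs2, ← key2 S1' S2' hs1' hs2', heq]
    simp [Prod.ext_iff, e1, e2]
  rw [hsplit, Set.ncard_image_of_injOn hinj, my_ncard_prod]
  congr 1
  have hd1 : Disjoint U1 U2 := by
    refine Set.disjoint_left.2 fun S hS1 hS2 => ?_
    obtain ⟨u, hu, hSu⟩ := Set.mem_iUnion₂.1 hS1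
    obtain ⟨w, hw, hSw⟩ := Set.mem_iUnion₂.1 hS2
    have h := hSu.2.1
    rw [hSw.2.1] at h
    exact Finset.notMem_empty u h
  have hd2 : Disjoint (U1 ∪ U2) (setC G Rj Nj) := by
    refine Set.disjoint_left.2 fun S hS1 hSC => ?_
    rcases hS1 with hS1 | hS1
    · obtain ⟨u, hu, hSu⟩ := Set.mem_iUnion₂.1 hS1
      have h := hSu.2.1
      rw [hSC.2.1] at h
      exact Finset.notMem_empty u h
    · obtain ⟨u, hu, hSu⟩ := Set.mem_iUnion₂.1 hS1
      exact hSu.2.2.2.1 (hSC.2.2 u hSu.2.2.1)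
  have hp1 : (↑(Nj.filter (fun u => u < v)) : Set V).Pairwise
      (Function.onFun Disjoint (fun u => setA G Rj Nj u)) := by
    intro a _ b _ hab
    refine Set.disjoint_left.2 fun S hSa hSb => hab ?_
    exact le_antisymm (hSb.2.2 a hSa.2.1) (hSa.2.2 b hSb.2.1)
  have hp2 : (↑(Nj ∩ Nk) : Set V).Pairwise
      (Function.onFun Disjoint (fun u => setB G Rj Nj u)) := by
    intro a _ b _ hab
    refine Set.disjoint_left.2 fun S hSa hSb => hab ?_
    exact le_antisymm (hSa.2.2.2.2 b hSb.2.2.1 hSb.2.2.2.1)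
      (hSb.2.2.2.2 a hSa.2.2.1 hSa.2.2.2.1)
  rw [hT, Set.ncard_union_eq hd2, hU1, hU2, Set.ncard_union_eq hd1,
    my_ncard_biUnion _ _ hp1, my_ncard_biUnion _ _ hp2]
end

section
/- For every v ∈ Ni ∩ Nk, |B(V, Nk, v)| = |B(Ri, Ni, v)| · ( Σ_{u ∈ Nj \ Nk} |A(Rj, Nj, u)| + Σ_{u ∈ Nj ∩ Nk, u > v} |B(Rj, Nj, u)| + |C(Rj, Nj)| ). (The cardinality recurrence for B used in the counting algorithm.) -/
variable {V : Type*}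

variable [LinearOrder V]

/-!
A member `S` of `B(V, Nk, v)` avoids `Nk`, and every edge between `Ri` and `Rj` has both ends in
`Nk`; hence `S ∩ Ri` and `S ∩ Rj` dominate exactly the vertices of their own region that `S`
dominates, and `S ↦ (S ∩ Ri, S ∩ Rj)` is a bijection onto a product. The `Ri`-halves are exactly
`B(Ri, Ni, v)`: a vertex of `Ni ∩ S` would dominate `v`, and the undominated vertices of `Ni`
are `≥ v`, so lie in `Nk` because `Ni \ Nk` lies below `Nk`. The `Rj`-halves are the sets
avoiding `Nk` whose undominated vertices lie in `Nj` above `v`. Sorting these by whether they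
meet `Nj` (then they lie in `A(Rj, Nj, u)` with `u ∉ Nk`, and dominate `Nj` as it is a clique),
dominate `Nj` (`C(Rj, Nj)`), or neither (`B(Rj, Nj, u)` with `v < u`, hence `u ∈ Nk`) gives the
second factor.
-/

open Finset Function

section

variable {G : SimpleGraph V} {R N K S : Finset V} {u v : V}

omit [LinearOrder V] in
lemma DomBy.mono {S' : Finset V} (h : S ⊆ S') (hd : DomBy G S u) : DomBy G S' u :=
  let ⟨s, hs, hsu⟩ := hd
  ⟨s, h hs, hsu⟩

lemma DomBy.inter_of_disjoint (hu : u ∈ R) (hSK : Disjoint S K)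
    (hsep : ∀ a ∉ R, ∀ b ∈ R, G.Adj a b → a ∈ K) (hd : DomBy G S u) : DomBy G (S ∩ R) u := by
  obtain ⟨s, hs, rfl | hadj⟩ := hd
  · exact ⟨s, mem_inter.2 ⟨hs, hu⟩, Or.inl rfl⟩
  · by_cases hsR : s ∈ R
    · exact ⟨s, mem_inter.2 ⟨hs, hsR⟩, Or.inr hadj⟩
    · exact absurd (hsep s hsR u hu hadj) (disjoint_left.1 hSK hs)

omit [LinearOrder V] in
lemma domBy_of_mem_clique (hN : G.IsClique (N : Set V)) {s : V} (hs : s ∈ S) (hsN : s ∈ N)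
    (hu : u ∈ N) : DomBy G S u :=
  ⟨s, hs, (eq_or_ne s u).imp id fun h => hN hsN hu h⟩

lemma mem_Scol_iff : S ∈ Scol G R N ↔ S ⊆ R ∧ ∀ u ∈ R, ¬ DomBy G S u → u ∈ N := by
  refine and_congr_right fun _ => ⟨fun hdom u hu hud => ?_, fun hund u hu => ?_⟩
  · exact by_contra fun huN => hud (hdom u (mem_sdiff.2 ⟨hu, huN⟩))
  · rw [mem_sdiff] at hu
    exact by_contra fun hud => hu.2 (hund u hu.1 hud)

lemma mem_setB_iff (hNR : N ⊆ R) :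
    S ∈ setB G R N v ↔ S ⊆ R ∧ Disjoint S N ∧ v ∈ N ∧ ¬ DomBy G S v ∧
      ∀ u ∈ R, ¬ DomBy G S u → u ∈ N ∧ v ≤ u := by
  rw [disjoint_iff_inter_eq_empty]
  constructor
  · rintro ⟨hS, hSN, hvN, hv, hmin⟩
    obtain ⟨hSR, hund⟩ := mem_Scol_iff.1 hS
    exact ⟨hSR, hSN, hvN, hv, fun u hu hud => ⟨hund u hu hud, hmin u (hund u hu hud) hud⟩⟩
  · rintro ⟨hSR, hSN, hvN, hv, hund⟩
    exact ⟨mem_Scol_iff.2 ⟨hSR, fun u hu hud => (hund u hu hud).1⟩, hSN, hvN, hv,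
      fun u hu hud => (hund u (hNR hu) hud).2⟩

lemma mem_setA_or_mem_setB_or_mem_setC (hS : S ∈ Scol G R N) :
    (∃ u, S ∈ setA G R N u) ∨ (∃ u, S ∈ setB G R N u) ∨ S ∈ setC G R N := by
  classical
  rcases (S ∩ N).eq_empty_or_nonempty with hSN | hSN
  · by_cases hdom : Dominates G S N
    · exact Or.inr (Or.inr ⟨hS, hSN, hdom⟩)
    · have hund : (N.filter fun u => ¬ DomBy G S u).Nonempty := by
        simpa [Dominates, Finset.Nonempty] using hdom
      obtain ⟨huN, hu⟩ := mem_filter.1 (min'_mem _ hund)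
      exact Or.inr (Or.inl ⟨_, hS, hSN, huN, hu,
        fun w hw hwd => min'_le _ w (mem_filter.2 ⟨hw, hwd⟩)⟩)
  · exact Or.inl ⟨_, hS, max'_mem _ hSN, fun w hw => le_max' _ w hw⟩

lemma pairwise_disjoint_setA : Pairwise (Disjoint on setA G R N) := by
  intro u w huw
  refine Set.disjoint_left.2 ?_
  rintro S ⟨-, hu, humax⟩ ⟨-, hw, hwmax⟩
  exact huw ((hwmax u hu).antisymm (humax w hw))

lemma pairwise_disjoint_setB : Pairwise (Disjoint on setB G R N) := by
  intro u w huw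
  refine Set.disjoint_left.2 ?_
  rintro S ⟨-, -, hu, hud, humin⟩ ⟨-, -, hw, hwd, hwmin⟩
  exact huw ((humin w hw hwd).antisymm (hwmin u hu hud))

lemma disjoint_setA_setB {w : V} : Disjoint (setA G R N u) (setB G R N w) :=
  Set.disjoint_left.2 fun _ hA hB => (eq_empty_iff_forall_notMem.1 hB.2.1) u hA.2.1

lemma disjoint_setA_setC : Disjoint (setA G R N u) (setC G R N) :=
  Set.disjoint_left.2 fun _ hA hC => (eq_empty_iff_forall_notMem.1 hC.2.1) u hA.2.1

lemma disjoint_setB_setC : Disjoint (setB G R N u) (setC G R N) :=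
  Set.disjoint_left.2 fun _ hB hC => hB.2.2.2.1 (hC.2.2 u hB.2.2.1)

lemma disjoint_of_inter_eq_empty (hSR : S ⊆ R) (hKN : ∀ x ∈ K, x ∈ R → x ∈ N)
    (hSN : S ∩ N = ∅) : Disjoint S K := by
  rw [← disjoint_iff_inter_eq_empty] at hSN
  exact disjoint_left.2 fun s hs hsK => disjoint_left.1 hSN hs (hKN s hsK (hSR hs))

/-- The sets `S ∩ Rj` for `S ∈ B(V, Nk, v)`, with `R, N, K` standing for `Rj, Nj, Nk`. -/
def setBPartner (G : SimpleGraph V) (R N K : Finset V) (v : V) : Set (Finset V) :=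
  {S | S ⊆ R ∧ Disjoint S K ∧ ∀ u ∈ R, ¬ DomBy G S u → u ∈ N ∧ v < u}

lemma setA_subset_setBPartner (hN : G.IsClique (N : Set V)) (hKN : ∀ x ∈ K, x ∈ R → x ∈ N)
    (hlt : ∀ w ∈ K, u < w) : setA G R N u ⊆ setBPartner G R N K v := by
  rintro S ⟨hS, huS, humax⟩
  rw [mem_inter] at huS
  obtain ⟨hSR, hund⟩ := mem_Scol_iff.1 hS
  refine ⟨hSR, disjoint_left.2 fun s hs hsK => ?_, fun w hwR hwd => ?_⟩
  · exact (humax s (mem_inter.2 ⟨hs, hKN s hsK (hSR hs)⟩)).not_gt (hlt s hsK)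
  · exact (hwd (domBy_of_mem_clique hN huS.1 huS.2 (hund w hwR hwd))).elim

lemma setB_subset_setBPartner (hKN : ∀ x ∈ K, x ∈ R → x ∈ N) (hvu : v < u) :
    setB G R N u ⊆ setBPartner G R N K v := by
  rintro S ⟨hS, hSN, -, -, humin⟩
  obtain ⟨hSR, hund⟩ := mem_Scol_iff.1 hS
  refine ⟨hSR, disjoint_of_inter_eq_empty hSR hKN hSN, fun w hwR hwd => ?_⟩
  exact ⟨hund w hwR hwd, hvu.trans_le (humin w (hund w hwR hwd) hwd)⟩

lemma setC_subset_setBPartner (hKN : ∀ x ∈ K, x ∈ R → x ∈ N) :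
    setC G R N ⊆ setBPartner G R N K v := by
  rintro S ⟨hS, hSN, hdom⟩
  obtain ⟨hSR, hund⟩ := mem_Scol_iff.1 hS
  exact ⟨hSR, disjoint_of_inter_eq_empty hSR hKN hSN,
    fun w hwR hwd => absurd (hdom w (hund w hwR hwd)) hwd⟩

lemma setBPartner_eq (hN : G.IsClique (N : Set V)) (hNR : N ⊆ R)
    (hKN : ∀ x ∈ K, x ∈ R → x ∈ N) (hvK : v ∈ K) (hlt : ∀ u ∈ N \ K, ∀ w ∈ K, u < w) :
    setBPartner G R N K v = (⋃ u ∈ N \ K, setA G R N u) ∪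
      (⋃ u ∈ (N ∩ K).filter (fun u => v < u), setB G R N u) ∪ setC G R N := by
  refine subset_antisymm ?_
    (Set.union_subset (Set.union_subset ?_ ?_) (setC_subset_setBPartner hKN))
  · rintro S ⟨hSR, hSK, hund⟩
    have hS : S ∈ Scol G R N := mem_Scol_iff.2 ⟨hSR, fun u hu hud => (hund u hu hud).1⟩
    simp only [Set.mem_union, Set.mem_iUnion, exists_prop]
    rcases mem_setA_or_mem_setB_or_mem_setC hS with ⟨u, hA⟩ | ⟨u, hB⟩ | hC
    · have huS := mem_inter.1 hA.2.1
      exact Or.inl (Or.inl ⟨u, mem_sdiff.2 ⟨huS.2, disjoint_left.1 hSK huS.1⟩, hA⟩)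
    · obtain ⟨huN, hvu⟩ := hund u (hNR hB.2.2.1) hB.2.2.2.1
      have huK : u ∈ K :=
        by_contra fun huK => (hlt u (mem_sdiff.2 ⟨huN, huK⟩) v hvK).not_gt hvu
      exact Or.inl (Or.inr ⟨u, mem_filter.2 ⟨mem_inter.2 ⟨huN, huK⟩, hvu⟩, hB⟩)
    · exact Or.inr hC
  · exact Set.iUnion₂_subset fun u hu => setA_subset_setBPartner hN hKN (hlt u hu)
  · exact Set.iUnion₂_subset fun u hu => setB_subset_setBPartner hKN (mem_filter.1 hu).2

lemma Set.ncard_biUnion_finset {ι α : Type*} [Finite α] {t : Finset ι} {s : ι → Set α}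
    (hs : Pairwise (Disjoint on s)) : (⋃ i ∈ t, s i).ncard = ∑ i ∈ t, (s i).ncard := by
  rw [← finsum_mem_coe_finset, ← t.finite_toSet.ncard_biUnion (fun _ _ => Set.toFinite _)
    (hs.set_pairwise _)]
  simp only [Finset.mem_coe]

lemma ncard_setBPartner [Finite V] (hN : G.IsClique (N : Set V)) (hNR : N ⊆ R)
    (hKN : ∀ x ∈ K, x ∈ R → x ∈ N) (hvK : v ∈ K) (hlt : ∀ u ∈ N \ K, ∀ w ∈ K, u < w) :
    (setBPartner G R N K v).ncard = ∑ u ∈ N \ K, (setA G R N u).ncard +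
      ∑ u ∈ (N ∩ K).filter (fun u => v < u), (setB G R N u).ncard + (setC G R N).ncard := by
  rw [setBPartner_eq hN hNR hKN hvK hlt,
    Set.ncard_union_eq ?_ (Set.toFinite _) (Set.toFinite _),
    Set.ncard_union_eq ?_ (Set.toFinite _) (Set.toFinite _),
    Set.ncard_biUnion_finset pairwise_disjoint_setA,
    Set.ncard_biUnion_finset pairwise_disjoint_setB]
  · exact Set.disjoint_iUnion₂_left.2 fun _ _ =>
      Set.disjoint_iUnion₂_right.2 fun _ _ => disjoint_setA_setB
  · exact Set.disjoint_union_left.2 ⟨Set.disjoint_iUnion₂_left.2 fun _ _ => disjoint_setA_setC,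
      Set.disjoint_iUnion₂_left.2 fun _ _ => disjoint_setB_setC⟩

end

section

variable {Ri Rj Ni Nj Nk : Finset V}

lemma union_inter_eq_left_of_disjoint {A B : Finset V} (hA : A ⊆ Ri) (hB : B ⊆ Rj)
    (hdisj : Disjoint Ri Rj) : (A ∪ B) ∩ Ri = A := by
  rw [union_inter_distrib_right, inter_eq_left.2 hA,
    disjoint_iff_inter_eq_empty.1 (disjoint_of_subset_left hB hdisj.symm), union_empty]

lemma ncard_eq_mul_of_mem_iff [Fintype V] (hdisj : Disjoint Ri Rj) (huniv : Ri ∪ Rj = univ)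
    {P X Y : Set (Finset V)} (hX : ∀ S ∈ X, S ⊆ Ri) (hY : ∀ S ∈ Y, S ⊆ Rj)
    (hP : ∀ S, S ∈ P ↔ S ∩ Ri ∈ X ∧ S ∩ Rj ∈ Y) : P.ncard = X.ncard * Y.ncard := by
  have hinj : Injective fun S : Finset V => (S ∩ Ri, S ∩ Rj) := fun S T h => by
    rw [Prod.mk.injEq] at h
    rw [← inter_univ S, ← inter_univ T, ← huniv, inter_union_distrib_left,
      inter_union_distrib_left, h.1, h.2]
  have himage : (fun S : Finset V => (S ∩ Ri, S ∩ Rj)) '' P = X ×ˢ Y := by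
    ext ⟨A, B⟩
    constructor
    · rintro ⟨S, hS, hSAB⟩
      rw [Prod.mk.injEq] at hSAB
      rw [← hSAB.1, ← hSAB.2]
      exact (hP S).1 hS
    · rintro ⟨hA, hB⟩
      have hAi : (A ∪ B) ∩ Ri = A := union_inter_eq_left_of_disjoint (hX A hA) (hY B hB) hdisj
      have hBj : (A ∪ B) ∩ Rj = B := by
        rw [union_comm]
        exact union_inter_eq_left_of_disjoint (hY B hB) (hX A hA) hdisj.symm
      refine ⟨A ∪ B, (hP _).2 ?_, Prod.ext hAi hBj⟩
      rw [hAi, hBj]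
      exact ⟨hA, hB⟩
  rw [← Set.ncard_prod, ← himage, Set.ncard_image_of_injective _ hinj]

lemma mem_setB_univ_iff [Fintype V] {G : SimpleGraph V} {S : Finset V} {v : V}
    (hdisj : Disjoint Ri Rj) (huniv : Ri ∪ Rj = univ) (hNiRi : Ni ⊆ Ri)
    (hNi : G.IsClique (Ni : Set V)) (hNkRi : ∀ x ∈ Nk, x ∈ Ri → x ∈ Ni)
    (hNkRj : ∀ x ∈ Nk, x ∈ Rj → x ∈ Nj) (hsepi : ∀ a ∉ Ri, ∀ b ∈ Ri, G.Adj a b → a ∈ Nk)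
    (hsepj : ∀ a ∉ Rj, ∀ b ∈ Rj, G.Adj a b → a ∈ Nk)
    (horder : ∀ u ∈ (Ni ∪ Nj) \ Nk, ∀ w ∈ Nk, u < w) (hvNi : v ∈ Ni) (hvNk : v ∈ Nk) :
    S ∈ setB G univ Nk v ↔ S ∩ Ri ∈ setB G Ri Ni v ∧ S ∩ Rj ∈ setBPartner G Rj Nj Nk v := by
  have hvRi := hNiRi hvNi
  have mem_Nk : ∀ u ∈ Ni ∪ Nj, v ≤ u → u ∈ Nk := fun u hu hvu =>
    by_contra fun huK => (horder u (mem_sdiff.2 ⟨hu, huK⟩) v hvNk).not_ge hvu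
  rw [mem_setB_iff (subset_univ _), mem_setB_iff hNiRi]
  constructor
  · rintro ⟨-, hSK, -, hvS, hund⟩
    have hundR : ∀ R, (∀ a ∉ R, ∀ b ∈ R, G.Adj a b → a ∈ Nk) →
        ∀ u ∈ R, ¬ DomBy G (S ∩ R) u → u ∈ Nk ∧ v ≤ u := fun R hsep u hu hud =>
      hund u (mem_univ u) fun hd => hud (hd.inter_of_disjoint hu hSK hsep)
    refine ⟨⟨inter_subset_right, disjoint_left.2 fun s hs hsNi => ?_, hvNi,
      fun hd => hvS (hd.mono inter_subset_left), fun u hu hud => ?_⟩,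
      inter_subset_right, hSK.mono_left inter_subset_left, fun u hu hud => ?_⟩
    · exact hvS (domBy_of_mem_clique hNi (mem_inter.1 hs).1 hsNi hvNi)
    · obtain ⟨huK, hvu⟩ := hundR Ri hsepi u hu hud
      exact ⟨hNkRi u huK hu, hvu⟩
    · obtain ⟨huK, hvu⟩ := hundR Rj hsepj u hu hud
      have hvu' : v ≠ u := (ne_of_mem_of_not_mem hu (disjoint_left.1 hdisj hvRi)).symm
      exact ⟨hNkRj u huK hu, hvu.lt_of_ne hvu'⟩
  · rintro ⟨⟨-, hSiN, -, hvS, hundi⟩, -, hSjK, hundj⟩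
    have hSK : Disjoint S Nk := by
      refine disjoint_left.2 fun s hs hsK => ?_
      rcases mem_union.1 (huniv ▸ mem_univ s : s ∈ Ri ∪ Rj) with hsR | hsR
      · exact disjoint_left.1 hSiN (mem_inter.2 ⟨hs, hsR⟩) (hNkRi s hsK hsR)
      · exact disjoint_left.1 hSjK (mem_inter.2 ⟨hs, hsR⟩) hsK
    refine ⟨subset_univ _, hSK, hvNk, fun hd => hvS (hd.inter_of_disjoint hvRi hSK hsepi),
      fun u _ hud => ?_⟩
    rcases mem_union.1 (huniv ▸ mem_univ u : u ∈ Ri ∪ Rj) with huR | huR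
    · obtain ⟨huN, hvu⟩ := hundi u huR fun hd => hud (hd.mono inter_subset_left)
      exact ⟨mem_Nk u (mem_union_left _ huN) hvu, hvu⟩
    · obtain ⟨huN, hvu⟩ := hundj u huR fun hd => hud (hd.mono inter_subset_left)
      exact ⟨mem_Nk u (mem_union_right _ huN) hvu.le, hvu.le⟩

end

theorem card_recurrence_B_general [Fintype V] (G : SimpleGraph V) (Ri Rj Ni Nj Nk : Finset V)
    (hdisj : Disjoint Ri Rj) (huniv : Ri ∪ Rj = Finset.univ)
    (hNiRi : Ni ⊆ Ri) (hNjRj : Nj ⊆ Rj) (hNk : Nk ⊆ Ni ∪ Nj)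
    (hNi : G.IsClique (Ni : Set V)) (hNj : G.IsClique (Nj : Set V))
    (hcross : ∀ a ∈ Ri, ∀ b ∈ Rj, G.Adj a b → a ∈ Nk ∧ b ∈ Nk)
    (horder : ∀ u ∈ (Ni ∪ Nj) \ Nk, ∀ w ∈ Nk, u < w) :
    ∀ v ∈ Ni ∩ Nk,
      (setB G Finset.univ Nk v).ncard =
        (setB G Ri Ni v).ncard *
          ((∑ u ∈ Nj \ Nk, (setA G Rj Nj u).ncard) +
           (∑ u ∈ (Nj ∩ Nk).filter (fun u => v < u), (setB G Rj Nj u).ncard) +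
           (setC G Rj Nj).ncard) := by
  intro v hv
  rw [mem_inter] at hv
  have hNkRi : ∀ x ∈ Nk, x ∈ Ri → x ∈ Ni := fun x hx hxR =>
    (mem_union.1 (hNk hx)).resolve_right fun hxN => disjoint_left.1 hdisj hxR (hNjRj hxN)
  have hNkRj : ∀ x ∈ Nk, x ∈ Rj → x ∈ Nj := fun x hx hxR =>
    (mem_union.1 (hNk hx)).resolve_left fun hxN => disjoint_left.1 hdisj (hNiRi hxN) hxR
  have hcover : ∀ a, a ∈ Ri ∨ a ∈ Rj := fun a => mem_union.1 (huniv ▸ mem_univ a)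
  have hsepi : ∀ a ∉ Ri, ∀ b ∈ Ri, G.Adj a b → a ∈ Nk := fun a ha b hb hab =>
    (hcross b hb a ((hcover a).resolve_left ha) hab.symm).2
  have hsepj : ∀ a ∉ Rj, ∀ b ∈ Rj, G.Adj a b → a ∈ Nk := fun a ha b hb hab =>
    (hcross a ((hcover a).resolve_right ha) b hb hab).1
  have hltj : ∀ u ∈ Nj \ Nk, ∀ w ∈ Nk, u < w := fun u hu =>
    horder u (sdiff_subset_sdiff subset_union_right subset_rfl hu)
  rw [ncard_eq_mul_of_mem_iff hdisj huniv (fun S hS => hS.1.1) (fun S hS => hS.1) fun S =>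
      mem_setB_univ_iff hdisj huniv hNiRi hNi hNkRi hNkRj hsepi hsepj horder hv.1 hv.2,
    ncard_setBPartner hNj hNjRj hNkRj hv.2 hltj]

/-- The cardinality recurrence for `B` used in the counting algorithm. -/
theorem card_recurrence_B [Fintype V] (G : SimpleGraph V) (Ri Rj Ni Nj Nk : Finset V)
    (hdisj : Disjoint Ri Rj) (huniv : Ri ∪ Rj = Finset.univ)
    (hNiRi : Ni ⊆ Ri) (hNjRj : Nj ⊆ Rj) (hNk : Nk ⊆ Ni ∪ Nj)
    (hNi : G.IsClique (Ni : Set V)) (hNj : G.IsClique (Nj : Set V))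
    (hNkc : G.IsClique (Nk : Set V))
    (hcross : ∀ a ∈ Ri, ∀ b ∈ Rj, G.Adj a b → a ∈ Nk ∧ b ∈ Nk)
    (horder : ∀ u ∈ (Ni ∪ Nj) \ Nk, ∀ w ∈ Nk, u < w) :
    ∀ v ∈ Ni ∩ Nk,
      (setB G Finset.univ Nk v).ncard =
        (setB G Ri Ni v).ncard *
          ((∑ u ∈ Nj \ Nk, (setA G Rj Nj u).ncard) +
           (∑ u ∈ (Nj ∩ Nk).filter (fun u => v < u), (setB G Rj Nj u).ncard) +
           (setC G Rj Nj).ncard) :=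
  card_recurrence_B_general G Ri Rj Ni Nj Nk hdisj huniv hNiRi hNjRj hNk hNi hNj hcross horder
end

section
/- Let N ⊆ V be a clique of G. Then the number of dominating sets of G equals Σ_{v ∈ N} |A(V, N, v)| + |C(V, N)|. (Correctness of the value returned by the counting algorithm at the root of the clique tree.) -/
variable {V : Type*}

variable [LinearOrder V]

private lemma ncard_biUnion_aux {α ι : Type*} [Finite α] (s : Finset ι) (f : ι → Set α)
    (h : ∀ i ∈ s, ∀ j ∈ s, i ≠ j → Disjoint (f i) (f j)) :
    (⋃ i ∈ s, f i).ncard = ∑ i ∈ s, (f i).ncard := by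
  classical
  induction s using Finset.induction with
  | empty => simp
  | @insert a s ha ih =>
    rw [Finset.set_biUnion_insert, Finset.sum_insert ha,
      Set.ncard_union_eq ?_ (Set.toFinite _) (Set.toFinite _),
      ih (fun i hi j hj hij => h i (Finset.mem_insert_of_mem hi) j
        (Finset.mem_insert_of_mem hj) hij)]
    simp only [Set.disjoint_iUnion_right]
    intro i hi
    exact h a (Finset.mem_insert_self a s) i (Finset.mem_insert_of_mem hi)
      (fun he => ha (he ▸ hi))

/-- Correctness of the value returned by the counting algorithm at the root: if `N` is a
clique, the number of dominating sets of `G` is `Σ_{v ∈ N} |A(V,N,v)| + |C(V,N)|`. -/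
theorem count_dominating_sets_at_root [Fintype V] (G : SimpleGraph V) (N : Finset V)
    (hN : G.IsClique (N : Set V)) :
    {S : Finset V | Dominates G S Finset.univ}.ncard =
      (∑ v ∈ N, (setA G Finset.univ N v).ncard) + (setC G Finset.univ N).ncard := by
  classical
  have hset : {S : Finset V | Dominates G S Finset.univ} =
      (⋃ v ∈ N, setA G Finset.univ N v) ∪ setC G Finset.univ N := by
    ext S
    simp only [Set.mem_setOf_eq, Set.mem_union, Set.mem_iUnion, exists_prop]
    constructor
    · intro hS
      have hScol : S ∈ Scol G Finset.univ N :=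
        ⟨Finset.subset_univ S, fun u _ => hS u (Finset.mem_univ u)⟩
      by_cases hSN : (S ∩ N).Nonempty
      · left
        refine ⟨(S ∩ N).max' hSN, Finset.mem_of_mem_inter_right ((S ∩ N).max'_mem hSN),
          hScol, (S ∩ N).max'_mem hSN, fun u hu => (S ∩ N).le_max' u hu⟩
      · right
        exact ⟨hScol, Finset.not_nonempty_iff_eq_empty.mp hSN,
          fun u _ => hS u (Finset.mem_univ u)⟩
    · rintro (⟨v, hvN, hScol, hv, _⟩ | ⟨hScol, hSN, hdom⟩)
      · intro u _
        by_cases huN : u ∈ N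
        · rcases eq_or_ne v u with rfl | hne
          · exact ⟨v, Finset.mem_of_mem_inter_left hv, Or.inl rfl⟩
          · exact ⟨v, Finset.mem_of_mem_inter_left hv,
              Or.inr (hN (Finset.mem_of_mem_inter_right hv) huN hne)⟩
        · exact hScol.2 u (Finset.mem_sdiff.mpr ⟨Finset.mem_univ u, huN⟩)
      · intro u _
        by_cases huN : u ∈ N
        · exact hdom u huN
        · exact hScol.2 u (Finset.mem_sdiff.mpr ⟨Finset.mem_univ u, huN⟩)
  have hdisjA : ∀ v ∈ N, ∀ w ∈ N, v ≠ w →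
      Disjoint (setA G Finset.univ N v) (setA G Finset.univ N w) := by
    intro v _ w _ hvw
    rw [Set.disjoint_left]
    rintro S ⟨_, hv, hle⟩ ⟨_, hw, hle'⟩
    exact hvw (le_antisymm (hle' v hv) (hle w hw))
  have hdisjC : Disjoint (⋃ v ∈ N, setA G Finset.univ N v) (setC G Finset.univ N) := by
    simp only [Set.disjoint_iUnion_left]
    intro v _
    rw [Set.disjoint_left]
    rintro S ⟨_, hv, _⟩ ⟨_, hSN, _⟩
    exact absurd hv (by simp [hSN])
  rw [hset, Set.ncard_union_eq hdisjC (Set.toFinite _) (Set.toFinite _),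
    ncard_biUnion_aux N _ hdisjA]
end

section
/- For every subset S ⊆ Q, the number of dominating sets D of G satisfying D ∩ Q = S equals 2^{|N(S) ∩ I|}. (The key counting step for split graphs used in the #P-completeness reduction.) -/
/-- `D` is a dominating set of `G`: every vertex not in `D` is adjacent to a vertex of `D`. -/
def Dominating {α : Type*} (G : SimpleGraph α) (D : Finset α) : Prop :=
  ∀ v, v ∉ D → ∃ d ∈ D, G.Adj d v

/-- In a split graph with clique `Q` and independent set `I` in which every vertex of `Q` has a
neighbor in `I`, for every `S ⊆ Q` the number of dominating sets `D` with `D ∩ Q = S` is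
`2^{|N(S) ∩ I|}`. -/
theorem count_dominating_with_fixed_clique_part {V : Type*} [Fintype V] [DecidableEq V]
    (G : SimpleGraph V) (Q I : Finset V)
    (hdisj : Disjoint Q I) (huniv : Q ∪ I = Finset.univ)
    (hQ : G.IsClique (Q : Set V)) (hI : ∀ a ∈ I, ∀ b ∈ I, ¬ G.Adj a b)
    (hnbr : ∀ q ∈ Q, ∃ i ∈ I, G.Adj q i)
    (S : Finset V) (hS : S ⊆ Q) :
    {D : Finset V | Dominating G D ∧ D ∩ Q = S}.ncard =
      2 ^ ({w : V | w ∈ I ∧ ∃ s ∈ S, G.Adj s w}).ncard := by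
  classical
  set NSI : Finset V := I.filter (fun w => ∃ s ∈ S, G.Adj s w) with hNSI
  have hNSImem : ∀ w, w ∈ NSI ↔ w ∈ I ∧ ∃ s ∈ S, G.Adj s w := by
    intro w; simp [hNSI]
  have hset : {w : V | w ∈ I ∧ ∃ s ∈ S, G.Adj s w} = ↑NSI := by
    ext w; simp [hNSImem w]
  have hcases : ∀ v : V, v ∈ Q ∨ v ∈ I := by
    intro v
    have : v ∈ Q ∪ I := huniv ▸ Finset.mem_univ v
    exact Finset.mem_union.mp this
  have hQnotI : ∀ v ∈ Q, v ∉ I := fun v hv hv' =>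
    Finset.disjoint_left.mp hdisj hv hv'
  have hNSIsubI : NSI ⊆ I := Finset.filter_subset _ _
  have hinterNSI : ∀ X : Finset V, X ⊆ NSI →
      (S ∪ (I \ NSI) ∪ X) ∩ NSI = X := by
    intro X hX
    ext v
    simp only [Finset.mem_inter, Finset.mem_union, Finset.mem_sdiff]
    constructor
    · rintro ⟨(hvS | ⟨hvI, hvN⟩) | hvX, hvNSI⟩
      · exact absurd (hNSIsubI hvNSI) (hQnotI v (hS hvS))
      · exact absurd hvNSI hvN
      · exact hvX
    · intro hvX
      exact ⟨Or.inr hvX, hX hvX⟩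
  have key : {D : Finset V | Dominating G D ∧ D ∩ Q = S}
      = (fun X => S ∪ (I \ NSI) ∪ X) '' ↑NSI.powerset := by
    ext D
    simp only [Set.mem_setOf_eq, Set.mem_image, Finset.coe_powerset, Set.mem_preimage,
      Set.mem_powerset_iff, Finset.coe_subset]
    constructor
    · rintro ⟨hdom, hDQ⟩
      have hIsub : I \ NSI ⊆ D := by
        intro i hi
        obtain ⟨hiI, hiN⟩ := Finset.mem_sdiff.mp hi
        by_contra hiD
        obtain ⟨d, hdD, hadj⟩ := hdom i hiD
        rcases hcases d with hdQ | hdI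
        · have hdS : d ∈ S := hDQ ▸ Finset.mem_inter.mpr ⟨hdD, hdQ⟩
          exact hiN ((hNSImem i).mpr ⟨hiI, d, hdS, hadj⟩)
        · exact hI d hdI i hiI hadj
      refine ⟨D ∩ NSI, Finset.inter_subset_right, ?_⟩
      ext v
      simp only [Finset.mem_union, Finset.mem_sdiff, Finset.mem_inter]
      constructor
      · rintro ((hvS | hvIN) | ⟨hvD, _⟩)
        · exact Finset.mem_of_mem_inter_left (hDQ ▸ hvS : v ∈ D ∩ Q)
        · exact hIsub (Finset.mem_sdiff.mpr hvIN)
        · exact hvD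
      · intro hvD
        rcases hcases v with hvQ | hvI
        · exact Or.inl (Or.inl (hDQ ▸ Finset.mem_inter.mpr ⟨hvD, hvQ⟩))
        · by_cases hvN : v ∈ NSI
          · exact Or.inr ⟨hvD, hvN⟩
          · exact Or.inl (Or.inr ⟨hvI, hvN⟩)
    · rintro ⟨X, hX, rfl⟩
      have hXI : X ⊆ I := hX.trans hNSIsubI
      have hDQ : (S ∪ (I \ NSI) ∪ X) ∩ Q = S := by
        ext v
        simp only [Finset.mem_inter, Finset.mem_union, Finset.mem_sdiff]
        constructor
        · rintro ⟨(hvS | ⟨hvI, _⟩) | hvX, hvQ⟩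
          · exact hvS
          · exact absurd hvI (hQnotI v hvQ)
          · exact absurd (hXI hvX) (hQnotI v hvQ)
        · intro hvS
          exact ⟨Or.inl (Or.inl hvS), hS hvS⟩
      refine ⟨?_, hDQ⟩
      intro v hv
      simp only [Finset.mem_union, Finset.mem_sdiff, not_or, not_and, not_not] at hv
      obtain ⟨⟨hvS, hvIN⟩, hvX⟩ := hv
      rcases hcases v with hvQ | hvI
      · rcases S.eq_empty_or_nonempty with hSe | ⟨s, hs⟩
        · have hNe : NSI = ∅ := by
            ext w; simp [hNSImem w, hSe]
          obtain ⟨i, hiI, hadj⟩ := hnbr v hvQ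
          refine ⟨i, ?_, hadj.symm⟩
          exact Finset.mem_union.mpr (Or.inl (Finset.mem_union.mpr (Or.inr
            (Finset.mem_sdiff.mpr ⟨hiI, by simp [hNe]⟩))))
        · have hne : s ≠ v := fun h => hvS (h ▸ hs)
          have hadj : G.Adj s v := hQ (Finset.mem_coe.mpr (hS hs))
            (Finset.mem_coe.mpr hvQ) hne
          exact ⟨s, Finset.mem_union.mpr (Or.inl (Finset.mem_union.mpr (Or.inl hs))), hadj⟩
      · have hvN : v ∈ NSI := hvIN hvI
        obtain ⟨_, s, hsS, hadj⟩ := (hNSImem v).mp hvN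
        exact ⟨s, Finset.mem_union.mpr (Or.inl (Finset.mem_union.mpr (Or.inl hsS))), hadj⟩
  rw [hset, Set.ncard_coe_finset, key,
    Set.ncard_image_of_injOn, Set.ncard_coe_finset, Finset.card_powerset]
  intro X hX Y hY h
  simp only [Finset.mem_coe, Finset.mem_powerset] at hX hY
  have h2 : (S ∪ (I \ NSI) ∪ X) ∩ NSI = (S ∪ (I \ NSI) ∪ Y) ∩ NSI := congrArg (fun D => D ∩ NSI) h
  rwa [hinterNSI X hX, hinterNSI Y hY] at h2
end

section
/- The number of dominating sets of G equals Σ_{S ⊆ Q} 2^{|N(S) ∩ I|}, where the sum ranges over all subsets S of the clique Q. (Equation (1) of the paper applied to split graphs.) -/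
/-- Equation (1): in a split graph with clique `Q` and independent set `I` in which every vertex
of `Q` has a neighbor in `I`, the number of dominating sets is `Σ_{S ⊆ Q} 2^{|N(S) ∩ I|}`. -/
theorem count_dominating_split_graph {V : Type*} [Fintype V] [DecidableEq V]
    (G : SimpleGraph V) (Q I : Finset V)
    (hdisj : Disjoint Q I) (huniv : Q ∪ I = Finset.univ)
    (hQ : G.IsClique (Q : Set V)) (hI : ∀ a ∈ I, ∀ b ∈ I, ¬ G.Adj a b)
    (hnbr : ∀ q ∈ Q, ∃ i ∈ I, G.Adj q i) :
    {D : Finset V | Dominating G D}.ncard =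
      ∑ S ∈ Q.powerset, 2 ^ ({w : V | w ∈ I ∧ ∃ s ∈ S, G.Adj s w}).ncard := by
  classical
  have hcard : {D : Finset V | Dominating G D}
      = ↑(Finset.univ.filter fun D : Finset V => Dominating G D) := by ext D; simp
  rw [hcard, Set.ncard_coe_finset]
  rw [Finset.card_eq_sum_card_fiberwise (f := fun D => D ∩ Q) (t := Q.powerset)
    (fun D _ => Finset.mem_powerset.mpr Finset.inter_subset_right)]
  refine Finset.sum_congr rfl ?_
  intro S hS
  have hset : {w : V | w ∈ I ∧ ∃ s ∈ S, G.Adj s w}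
      = ↑(I.filter fun w => ∃ s ∈ S, G.Adj s w) := by ext w; simp
  rw [hset, Set.ncard_coe_finset, ← Finset.card_powerset]
  set N := I.filter (fun w => ∃ s ∈ S, G.Adj s w) with hN
  have hSQ : S ⊆ Q := Finset.mem_powerset.mp hS
  have hNI : N ⊆ I := Finset.filter_subset _ _
  have key : ∀ D : Finset V, D ∩ Q = S → (Dominating G D ↔ I \ N ⊆ D) := by
    intro D hDQ
    constructor
    · intro hdom v hv
      rw [Finset.mem_sdiff] at hv
      by_contra hvD
      obtain ⟨d, hdD, hadj⟩ := hdom v hvD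
      have hd : d ∈ Q ∪ I := huniv ▸ Finset.mem_univ d
      rcases Finset.mem_union.mp hd with hdQ | hdI
      · have hdS : d ∈ S := hDQ ▸ Finset.mem_inter.mpr ⟨hdD, hdQ⟩
        exact hv.2 (Finset.mem_filter.mpr ⟨hv.1, d, hdS, hadj⟩)
      · exact hI d hdI v hv.1 hadj
    · intro hsub v hvD
      have hv : v ∈ Q ∪ I := huniv ▸ Finset.mem_univ v
      rcases Finset.mem_union.mp hv with hvQ | hvI
      · rcases S.eq_empty_or_nonempty with rfl | ⟨s, hs⟩
        · obtain ⟨i, hiI, hadj⟩ := hnbr v hvQ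
          have hiN : i ∉ N := by simp [hN]
          exact ⟨i, hsub (Finset.mem_sdiff.mpr ⟨hiI, hiN⟩), hadj.symm⟩
        · have hsD : s ∈ D := (Finset.mem_inter.mp (hDQ.symm ▸ hs)).1
          have hne : s ≠ v := fun h => hvD (h ▸ hsD)
          exact ⟨s, hsD, hQ (hSQ hs) hvQ hne⟩
      · have hvN : v ∈ N := by
          by_contra hvN
          exact hvD (hsub (Finset.mem_sdiff.mpr ⟨hvI, hvN⟩))
        obtain ⟨-, s, hsS, hadj⟩ := Finset.mem_filter.mp hvN
        have hsD : s ∈ D := (Finset.mem_inter.mp (hDQ.symm ▸ hsS)).1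
        exact ⟨s, hsD, hadj⟩
  have hSN : S ∩ N = ∅ := by
    apply Finset.eq_empty_of_forall_notMem
    intro x hx
    rw [Finset.mem_inter] at hx
    exact (Finset.disjoint_left.mp hdisj (hSQ hx.1)) (hNI hx.2)
  refine Finset.card_bij' (fun D _ => D ∩ N) (fun T _ => S ∪ (I \ N) ∪ T) ?_ ?_ ?_ ?_
  · intro D hD
    exact Finset.mem_powerset.mpr Finset.inter_subset_right
  · intro T hT
    have hTN : T ⊆ N := Finset.mem_powerset.mp hT
    have hQint : (S ∪ (I \ N) ∪ T) ∩ Q = S := by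
      rw [Finset.union_inter_distrib_right, Finset.union_inter_distrib_right]
      have h1 : S ∩ Q = S := Finset.inter_eq_left.mpr hSQ
      have h2 : (I \ N) ∩ Q = ∅ := by
        apply Finset.eq_empty_of_forall_notMem
        intro x hx
        rw [Finset.mem_inter, Finset.mem_sdiff] at hx
        exact Finset.disjoint_left.mp hdisj hx.2 hx.1.1
      have h3 : T ∩ Q = ∅ := by
        apply Finset.eq_empty_of_forall_notMem
        intro x hx
        rw [Finset.mem_inter] at hx
        exact Finset.disjoint_left.mp hdisj hx.2 (hNI (hTN hx.1))
      rw [h1, h2, h3, Finset.union_empty, Finset.union_empty]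
    rw [Finset.mem_filter, Finset.mem_filter]
    refine ⟨⟨Finset.mem_univ _, ?_⟩, hQint⟩
    rw [key _ hQint]
    intro x hx
    exact Finset.mem_union.mpr (Or.inl (Finset.mem_union.mpr (Or.inr hx)))
  · intro D hD
    rw [Finset.mem_filter, Finset.mem_filter] at hD
    obtain ⟨⟨-, hdom⟩, hDQ⟩ := hD
    have hIsub : I \ N ⊆ D := (key D hDQ).mp hdom
    ext x
    simp only [Finset.mem_union, Finset.mem_inter, Finset.mem_sdiff]
    constructor
    · rintro ((hxS | hxI) | ⟨hxD, -⟩)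
      · exact (Finset.mem_inter.mp (hDQ.symm ▸ hxS)).1
      · exact hIsub (Finset.mem_sdiff.mpr hxI)
      · exact hxD
    · intro hxD
      have hx : x ∈ Q ∪ I := huniv ▸ Finset.mem_univ x
      rcases Finset.mem_union.mp hx with hxQ | hxI
      · exact Or.inl (Or.inl (hDQ ▸ Finset.mem_inter.mpr ⟨hxD, hxQ⟩))
      · by_cases hxN : x ∈ N
        · exact Or.inr ⟨hxD, hxN⟩
        · exact Or.inl (Or.inr ⟨hxI, hxN⟩)
  · intro T hT
    have hTN : T ⊆ N := Finset.mem_powerset.mp hT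
    show (S ∪ I \ N ∪ T) ∩ N = T
    rw [Finset.union_inter_distrib_right, Finset.union_inter_distrib_right, hSN,
      Finset.sdiff_inter_self, Finset.inter_eq_left.mpr hTN, Finset.empty_union,
      Finset.empty_union]
end

section
/- Fix r ≥ 1 and define the split graph Gʳ on vertex set Q ⊎ (I × {1,…,r}) as follows: Q is a clique in Gʳ, the set I × {1,…,r} is independent in Gʳ, and (i,s) is adjacent in Gʳ to q ∈ Q if and only if i is adjacent to q in G. Then the number of dominating sets of Gʳ equals Σ_{S ⊆ Q} 2^{r·|N(S) ∩ I|} = Σ_{S ⊆ Q} (2^r)^{|N(S) ∩ I|}. (The generalization giving Equation (2) of the paper.) -/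
/-- The graph `Gʳ` on vertex set `Q ⊎ (I × {1,…,r})`: `Q` is a clique, `I × {1,…,r}` is
independent, and `(i,s)` is adjacent to `q ∈ Q` iff `i` is adjacent to `q` in `G`. -/
def Gr {V : Type*} (G : SimpleGraph V) (Q I : Finset V) (r : ℕ) :
    SimpleGraph ({q : V // q ∈ Q} ⊕ ({i : V // i ∈ I} × Fin r)) :=
  SimpleGraph.fromRel (fun x y =>
    match x, y with
    | Sum.inl _, Sum.inl _ => True
    | Sum.inl q, Sum.inr (i, _) => G.Adj q.1 i.1
    | Sum.inr _, Sum.inl _ => False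
    | Sum.inr _, Sum.inr _ => False)

open Finset

lemma card_filter_compl_subset {β : Type*} [Fintype β] [DecidableEq β] (C : Finset β) :
    #{B : Finset β | Cᶜ ⊆ B} = 2 ^ #C := by
  have hIcc : ({B : Finset β | Cᶜ ⊆ B} : Finset (Finset β)) = Icc Cᶜ univ := by
    ext B; simp
  rw [hIcc, card_Icc_finset (subset_univ _), card_univ, card_compl,
    Nat.sub_sub_self (card_le_univ C)]

lemma card_filter_eq_sum_card_filter_disjSum {α β : Type*} [Fintype α] [Fintype β]
    (P : Finset (α ⊕ β) → Prop) [DecidablePred P] :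
    #{D | P D} = ∑ A : Finset α, #{B : Finset β | P (A.disjSum B)} := by
  simp only [card_filter]
  rw [Fintype.sum_equiv sumEquiv.toEquiv _ (fun p => if P (p.1.disjSum p.2) then 1 else 0)
    (fun D => by simp [toLeft_disjSum_toRight]), Fintype.sum_prod_type]

lemma sum_finset_subtype_map_eq_sum_powerset {α M : Type*} [AddCommMonoid M] (s : Finset α)
    (f : Finset α → M) :
    ∑ A : Finset s, f (A.map (.subtype _)) = ∑ S ∈ s.powerset, f S := by
  classical
  refine sum_nbij' (fun A => A.map (.subtype _)) (fun S => S.subtype (· ∈ s)) ?_ ?_ ?_ ?_ ?_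
  · intro A _
    simp_all [subset_iff]
  · intro S hS
    simp
  · intro A _
    ext x; simp
  · intro S hS
    exact subtype_map_of_mem (mem_powerset.mp hS)
  · intro A _
    rfl

section Gr

variable {V : Type*} {G : SimpleGraph V} {Q I : Finset V} {r : ℕ}

@[simp]
lemma Gr_adj_inl_inl {a b : Q} : (Gr G Q I r).Adj (.inl a) (.inl b) ↔ a ≠ b := by
  simp [Gr]

@[simp]
lemma Gr_adj_inl_inr {a : Q} {p : I × Fin r} :
    (Gr G Q I r).Adj (.inl a) (.inr p) ↔ G.Adj a p.1 := by
  simp [Gr]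

@[simp]
lemma Gr_adj_inr_inl {a : Q} {p : I × Fin r} :
    (Gr G Q I r).Adj (.inr p) (.inl a) ↔ G.Adj a p.1 := by
  simp [Gr]

@[simp]
lemma Gr_not_adj_inr_inr {p p' : I × Fin r} : ¬ (Gr G Q I r).Adj (.inr p) (.inr p') := by
  simp [Gr]

lemma dominating_Gr_disjSum_iff (hnbr : ∀ q ∈ Q, ∃ i ∈ I, G.Adj q i) (hr : 1 ≤ r)
    {A : Finset Q} {B : Finset (I × Fin r)} :
    Dominating (Gr G Q I r) (A.disjSum B) ↔ ∀ p ∉ B, ∃ q ∈ A, G.Adj q p.1 := by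
  constructor
  · intro hD p hp
    obtain ⟨d | d, hd, hadj⟩ := hD (.inr p) (by simpa using hp)
    · exact ⟨d, by simpa using hd, by simpa using hadj⟩
    · simp at hadj
  · rintro hB (q | p) hv
    · obtain ⟨q', hq'⟩ | rfl := A.eq_empty_or_nonempty.symm
      · exact ⟨.inl q', by simpa using hq', Gr_adj_inl_inl.mpr (by rintro rfl; simp_all)⟩
      · obtain ⟨i, hi, hqi⟩ := hnbr q q.2
        have hp : (⟨i, hi⟩, ⟨0, hr⟩) ∈ B := by
          by_contra hp
          simpa using hB _ hp
        exact ⟨.inr _, by simpa using hp, by simpa using hqi⟩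
    · obtain ⟨q, hq, hadj⟩ := hB p (by simpa using hv)
      exact ⟨.inl q, by simpa using hq, by simpa using hadj⟩

open Classical in
lemma card_filter_exists_adj_copies (A : Finset Q) :
    #{p : I × Fin r | ∃ q ∈ A, G.Adj q p.1} =
      r * {w : V | w ∈ I ∧ ∃ s ∈ A.map (.subtype _), G.Adj s w}.ncard := by
  have hprod : ({p : I × Fin r | ∃ q ∈ A, G.Adj q p.1} : Finset _) =
      ({i : I | ∃ q ∈ A, G.Adj q i} : Finset I) ×ˢ univ := by
    ext p; simp
  have himage : {w : V | w ∈ I ∧ ∃ s ∈ A.map (.subtype _), G.Adj s w} =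
      Subtype.val '' (({i : I | ∃ q ∈ A, G.Adj q i} : Finset I) : Set I) := by
    ext w; simp [and_comm]
  rw [hprod, card_product, card_univ, Fintype.card_fin, himage,
    Set.ncard_image_of_injective _ Subtype.val_injective, Set.ncard_coe_finset, mul_comm]

end Gr

theorem count_dominating_Gr_general {V : Type*}
    (G : SimpleGraph V) (Q I : Finset V)
    (hnbr : ∀ q ∈ Q, ∃ i ∈ I, G.Adj q i)
    (r : ℕ) (hr : 1 ≤ r) :
    {D : Finset ({q : V // q ∈ Q} ⊕ ({i : V // i ∈ I} × Fin r)) |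
        Dominating (Gr G Q I r) D}.ncard =
      ∑ S ∈ Q.powerset, 2 ^ (r * ({w : V | w ∈ I ∧ ∃ s ∈ S, G.Adj s w}).ncard) ∧
    {D : Finset ({q : V // q ∈ Q} ⊕ ({i : V // i ∈ I} × Fin r)) |
        Dominating (Gr G Q I r) D}.ncard =
      ∑ S ∈ Q.powerset, (2 ^ r) ^ ({w : V | w ∈ I ∧ ∃ s ∈ S, G.Adj s w}).ncard := by
  classical
  simp_rw [pow_mul, and_self]
  rw [Set.ncard_eq_toFinset_card', Set.toFinset_ofPred, card_filter_eq_sum_card_filter_disjSum,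
    ← sum_finset_subtype_map_eq_sum_powerset]
  refine sum_congr rfl fun A _ => ?_
  simp_rw [dominating_Gr_disjSum_iff hnbr hr]
  rw [← pow_mul, ← card_filter_exists_adj_copies, ← card_filter_compl_subset]
  congr 1
  ext B
  simp only [subset_iff, mem_compl, mem_filter, mem_univ, true_and]
  exact forall_congr' fun p => not_imp_comm

/-- Equation (2): for a split graph `G` with clique `Q` and independent set `I` in which every
vertex of `Q` has a neighbor in `I`, and for `r ≥ 1`, the number of dominating sets of `Gʳ` is
`Σ_{S ⊆ Q} 2^{r·|N(S) ∩ I|} = Σ_{S ⊆ Q} (2^r)^{|N(S) ∩ I|}`. -/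
theorem count_dominating_Gr {V : Type*} [Fintype V] [DecidableEq V]
    (G : SimpleGraph V) (Q I : Finset V)
    (hdisj : Disjoint Q I) (huniv : Q ∪ I = Finset.univ)
    (hQ : G.IsClique (Q : Set V)) (hI : ∀ a ∈ I, ∀ b ∈ I, ¬ G.Adj a b)
    (hnbr : ∀ q ∈ Q, ∃ i ∈ I, G.Adj q i)
    (r : ℕ) (hr : 1 ≤ r) :
    {D : Finset ({q : V // q ∈ Q} ⊕ ({i : V // i ∈ I} × Fin r)) |
        Dominating (Gr G Q I r) D}.ncard =
      ∑ S ∈ Q.powerset, 2 ^ (r * ({w : V | w ∈ I ∧ ∃ s ∈ S, G.Adj s w}).ncard) ∧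
    {D : Finset ({q : V // q ∈ Q} ⊕ ({i : V // i ∈ I} × Fin r)) |
        Dominating (Gr G Q I r) D}.ncard =
      ∑ S ∈ Q.powerset, (2 ^ r) ^ ({w : V | w ∈ I ∧ ∃ s ∈ S, G.Adj s w}).ncard :=
  count_dominating_Gr_general G Q I hnbr r hr
end

section
/- The number of dominating sets of G_B equals Σ_{S ⊆ E(B)} 2^{c(S)}, where the sum ranges over all subsets S of the edge set of B. (The formula #DS(G¹) = Σ_{S⊆Q} 2^{|N(S)∩(X∪Y)|} for the split graph constructed in the reduction, with Q = E(B).) -/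
/-- The split graph `G_B` on vertex set `V(B) ⊎ E(B)`: the edges of `B` form a clique, the
vertices of `B` form an independent set, and each edge is adjacent exactly to its endpoints. -/
def GB {W : Type*} (B : SimpleGraph W) : SimpleGraph (W ⊕ B.edgeSet) :=
  SimpleGraph.fromRel (fun x y =>
    match x, y with
    | Sum.inl v, Sum.inr e => v ∈ (e : Sym2 W)
    | Sum.inr _, Sum.inr _ => True
    | _, _ => False)

lemma GB_adj_inl_inr {W : Type*} (B : SimpleGraph W) (v : W) (e : B.edgeSet)
    (h : v ∈ (e : Sym2 W)) : (GB B).Adj (Sum.inl v) (Sum.inr e) := by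
  rw [GB, SimpleGraph.fromRel_adj]
  exact ⟨by simp, Or.inl h⟩

lemma GB_adj_inr_inr {W : Type*} (B : SimpleGraph W) (e f : B.edgeSet)
    (h : e ≠ f) : (GB B).Adj (Sum.inr e) (Sum.inr f) := by
  rw [GB, SimpleGraph.fromRel_adj]
  exact ⟨by simp [h], Or.inl trivial⟩

/-- `#DS(G_B) = Σ_{S ⊆ E(B)} 2^{c(S)}`, where `c(S)` is the number of vertices of `B` incident
to at least one edge of `S`. -/
theorem count_dominating_GB {W : Type*} [Fintype W] [DecidableEq W]
    (B : SimpleGraph W) [DecidableRel B.Adj] (hB : B.edgeSet.Nonempty) :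
    {D : Finset (W ⊕ B.edgeSet) | Dominating (GB B) D}.ncard =
      ∑ S ∈ (Finset.univ : Finset (Finset B.edgeSet)),
        2 ^ ({v : W | ∃ e ∈ S, v ∈ (e : Sym2 W)}).ncard := by
  classical
  have hset : {D : Finset (W ⊕ B.edgeSet) | Dominating (GB B) D} =
      ↑(Finset.univ.filter fun D => Dominating (GB B) D) := by
    ext D; simp
  rw [hset, Set.ncard_coe_finset]
  rw [Finset.card_eq_sum_card_fiberwise
    (f := fun D : Finset (W ⊕ B.edgeSet) => D.toRight) (t := Finset.univ)
    (fun _ _ => Finset.mem_univ _)]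
  refine Finset.sum_congr rfl fun S _ => ?_
  set cov : Finset W := Finset.univ.filter (fun v => ∃ e ∈ S, v ∈ (e : Sym2 W)) with hcovdef
  have hcovmem : ∀ v : W, v ∈ cov ↔ ∃ e ∈ S, v ∈ (e : Sym2 W) := by
    intro v; simp [hcovdef]
  have hcov : {v : W | ∃ e ∈ S, v ∈ (e : Sym2 W)} = ↑cov := by
    ext v; simp [hcovmem]
  rw [hcov, Set.ncard_coe_finset, ← Finset.card_powerset]
  -- key fact: if D is dominating with D.toRight = S, then covᶜ ⊆ D.toLeft
  have key : ∀ D : Finset (W ⊕ B.edgeSet), Dominating (GB B) D → D.toRight = S →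
      ∀ w : W, w ∉ D.toLeft → w ∈ cov := by
    intro D hD hDS w hw
    rw [Finset.mem_toLeft] at hw
    obtain ⟨d, hd, hadj⟩ := hD _ hw
    match d with
    | Sum.inl v =>
      rw [GB, SimpleGraph.fromRel_adj] at hadj
      rcases hadj.2 with h | h <;> exact absurd h (by simp)
    | Sum.inr e =>
      rw [GB, SimpleGraph.fromRel_adj] at hadj
      have hwe : w ∈ (e : Sym2 W) := by
        rcases hadj.2 with h | h
        · exact absurd h (by simp)
        · exact h
      exact (hcovmem w).2 ⟨e, by rw [← hDS, Finset.mem_toRight]; exact hd, hwe⟩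
  refine Finset.card_bij' (fun D _ => D.toLeft ∩ cov)
    (fun A _ => (A ∪ covᶜ).disjSum S) ?_ ?_ ?_ ?_
  · intro D _; exact Finset.mem_powerset.2 Finset.inter_subset_right
  · -- (A ∪ covᶜ).disjSum S is a dominating set with toRight = S
    intro A hA
    rw [Finset.mem_powerset] at hA
    simp only [Finset.mem_filter, Finset.mem_univ, true_and, Finset.toRight_disjSum,
      and_true]
    intro v hv
    match v with
    | Sum.inl w =>
      rw [Finset.inl_mem_disjSum] at hv
      have hwcov : w ∈ cov := by
        by_contra hc
        exact hv (Finset.mem_union_right _ (Finset.mem_compl.2 hc))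
      obtain ⟨e, heS, hwe⟩ := (hcovmem w).1 hwcov
      exact ⟨Sum.inr e, Finset.inr_mem_disjSum.2 heS, ((GB_adj_inl_inr B w e hwe).symm)⟩
    | Sum.inr e =>
      rw [Finset.inr_mem_disjSum] at hv
      rcases S.eq_empty_or_nonempty with hS | ⟨f, hf⟩
      · -- S empty: cov = ∅, so A ∪ covᶜ = univ contains an endpoint of e
        obtain ⟨w, hw⟩ : ∃ w, w ∈ (e : Sym2 W) := ⟨(e : Sym2 W).out.1, Sym2.out_fst_mem _⟩
        have hwm : Sum.inl w ∈ (A ∪ covᶜ).disjSum S := by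
          rw [Finset.inl_mem_disjSum]
          refine Finset.mem_union_right _ (Finset.mem_compl.2 ?_)
          rw [hcovmem]; simp [hS]
        exact ⟨Sum.inl w, hwm, GB_adj_inl_inr B w e hw⟩
      · refine ⟨Sum.inr f, Finset.inr_mem_disjSum.2 hf, GB_adj_inr_inr B f e ?_⟩
        rintro rfl; exact hv hf
  · -- left inverse
    intro D hD
    rw [Finset.mem_filter] at hD
    obtain ⟨hDdom, hDS⟩ := hD
    simp only [Finset.mem_filter, Finset.mem_univ, true_and] at hDdom
    have hsub := key D hDdom hDS
    show (D.toLeft ∩ cov ∪ covᶜ).disjSum S = D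
    have hleft : D.toLeft ∩ cov ∪ covᶜ = D.toLeft := by
      ext w
      simp only [Finset.mem_union, Finset.mem_inter, Finset.mem_compl]
      constructor
      · rintro (⟨h, _⟩ | h)
        · exact h
        · by_contra hc; exact h (hsub w hc)
      · intro h
        by_cases hc : w ∈ cov
        · exact Or.inl ⟨h, hc⟩
        · exact Or.inr hc
    rw [hleft, ← hDS, Finset.toLeft_disjSum_toRight]
  · -- right inverse
    intro A hA
    rw [Finset.mem_powerset] at hA
    show ((A ∪ covᶜ).disjSum S).toLeft ∩ cov = A
    rw [Finset.toLeft_disjSum]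
    ext v
    simp only [Finset.mem_inter, Finset.mem_union, Finset.mem_compl]
    constructor
    · rintro ⟨hv1 | hv1, hv2⟩
      · exact hv1
      · exact absurd hv2 hv1
    · intro h; exact ⟨Or.inl h, hA h⟩
end
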